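/- arXiv:2006.04124 — 12 statements merged into one kernel-verified Lean document; each statement's English description precedes it below -/
import Mathlib

section
/- Let a ∈ ℝⁿ with ‖a‖_∞ = 1 and let N ≥ 1 be an integer. Then there exists a positive integer l ≤ N^n such that the vector a' obtained by rounding each coordinate of l·a to the nearest integer satisfies ‖l·a − a'‖_∞ < 1/N and ‖a'‖_∞ = l. -/
/-- Dirichlet-type simultaneous Diophantine approximation (Lemma 2.4):
for `a` with `‖a‖_∞ = 1` and `N ≥ 1` there is `1 ≤ l ≤ N^n` with
`‖l·a − round(l·a)‖_∞ < 1/N` and `‖round(l·a)‖_∞ = l`. -/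
theorem stmt0 (n N : ℕ) (hN : 1 ≤ N) (a : Fin n → ℝ)
    (ha : (⨆ i, |a i|) = 1) :
    ∃ l : ℕ, 0 < l ∧ l ≤ N ^ n ∧
      (⨆ i, |(l : ℝ) * a i - (round ((l : ℝ) * a i) : ℝ)|) < 1 / N ∧
      (⨆ i, |((round ((l : ℝ) * a i) : ℤ) : ℝ)|) = (l : ℝ) := by
  have hn : 0 < n := by
    rcases Nat.eq_zero_or_pos n with h | h
    · subst h
      rw [Real.iSup_of_isEmpty] at ha
      norm_num at ha
    · exact h
  haveI : Nonempty (Fin n) := ⟨⟨0, hn⟩⟩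
  have hNR : (0 : ℝ) < N := by positivity
  -- basic facts about a
  have hbd : ∀ i, |a i| ≤ 1 := by
    intro i
    rw [← ha]
    exact le_ciSup (Set.Finite.bddAbove (Set.finite_range fun j => |a j|)) i
  obtain ⟨i0, hi0⟩ := Finite.exists_max (fun i => |a i|)
  have hi0' : |a i0| = 1 := le_antisymm (hbd i0) (by rw [← ha]; exact ciSup_le hi0)
  -- pigeonhole setup
  have hfl : ∀ (k : ℕ) (i : Fin n),
      (⌊(N : ℝ) * Int.fract ((k : ℝ) * a i)⌋).toNat < N := by
    intro k i
    have h0 : 0 ≤ ⌊(N : ℝ) * Int.fract ((k : ℝ) * a i)⌋ :=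
      Int.floor_nonneg.mpr (mul_nonneg hNR.le (Int.fract_nonneg _))
    have h1 : ⌊(N : ℝ) * Int.fract ((k : ℝ) * a i)⌋ < (N : ℤ) := by
      apply Int.floor_lt.mpr
      push_cast
      calc (N : ℝ) * Int.fract ((k : ℝ) * a i) < N * 1 :=
            mul_lt_mul_of_pos_left (Int.fract_lt_one _) hNR
        _ = N := mul_one _
    omega
  let F : Fin (N ^ n + 1) → (Fin n → Fin N) := fun k i =>
    ⟨(⌊(N : ℝ) * Int.fract (((k : ℕ) : ℝ) * a i)⌋).toNat, hfl k i⟩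
  have hcard : Fintype.card (Fin n → Fin N) < Fintype.card (Fin (N ^ n + 1)) := by
    simp [Fintype.card_fun]
  obtain ⟨k, k', hne, heq⟩ := Fintype.exists_ne_map_eq_of_card_lt F hcard
  -- wlog k < k'
  obtain ⟨p, q, hpq, hFeq⟩ : ∃ p q : ℕ, p < q ∧ q ≤ N ^ n ∧
      ∀ i, ⌊(N : ℝ) * Int.fract ((p : ℝ) * a i)⌋ = ⌊(N : ℝ) * Int.fract ((q : ℝ) * a i)⌋ := by
    have key : ∀ i, ⌊(N : ℝ) * Int.fract (((k : ℕ) : ℝ) * a i)⌋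
        = ⌊(N : ℝ) * Int.fract (((k' : ℕ) : ℝ) * a i)⌋ := by
      intro i
      have := congrFun heq i
      have h0 : (0:ℤ) ≤ ⌊(N : ℝ) * Int.fract (((k : ℕ) : ℝ) * a i)⌋ :=
        Int.floor_nonneg.mpr (mul_nonneg hNR.le (Int.fract_nonneg _))
      have h0' : (0:ℤ) ≤ ⌊(N : ℝ) * Int.fract (((k' : ℕ) : ℝ) * a i)⌋ :=
        Int.floor_nonneg.mpr (mul_nonneg hNR.le (Int.fract_nonneg _))
      have := Fin.mk.injEq _ _ _ _ ▸ this
      omega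
    have hkk' : (k : ℕ) ≠ (k' : ℕ) := fun h => hne (Fin.ext h)
    rcases lt_or_gt_of_ne hkk' with h | h
    · exact ⟨k, k', h, Nat.lt_succ_iff.mp k'.isLt, key⟩
    · exact ⟨k', k, h, Nat.lt_succ_iff.mp k.isLt, fun i => (key i).symm⟩
  obtain ⟨hqN, hfloor⟩ := hFeq
  refine ⟨q - p, by omega, by omega, ?_, ?_⟩
  have hcast : ((q - p : ℕ) : ℝ) = (q : ℝ) - p := by
    push_cast [Nat.cast_sub hpq.le]; ring
  -- key pointwise bound
  have hpt : ∀ i, |((q - p : ℕ) : ℝ) * a i - (round (((q - p : ℕ) : ℝ) * a i) : ℝ)| < 1 / N := by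
    intro i
    set x := ((q - p : ℕ) : ℝ) * a i with hx
    have hm : |x - ((⌊(q : ℝ) * a i⌋ - ⌊(p : ℝ) * a i⌋ : ℤ) : ℝ)| < 1 / N := by
      have h1 : |(N : ℝ) * Int.fract ((q : ℝ) * a i) - (N : ℝ) * Int.fract ((p : ℝ) * a i)| < 1 :=
        Int.abs_sub_lt_one_of_floor_eq_floor (hfloor i).symm
      have h2 : x - ((⌊(q : ℝ) * a i⌋ - ⌊(p : ℝ) * a i⌋ : ℤ) : ℝ)
          = Int.fract ((q : ℝ) * a i) - Int.fract ((p : ℝ) * a i) := by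
        rw [hx, hcast, Int.fract, Int.fract]
        push_cast
        ring
      rw [h2]
      rw [← mul_sub, abs_mul, abs_of_pos hNR] at h1
      rw [lt_div_iff₀ hNR]
      linarith [mul_comm (N : ℝ) |Int.fract ((q : ℝ) * a i) - Int.fract ((p : ℝ) * a i)|]
    exact lt_of_le_of_lt (round_le x _) hm
  · obtain ⟨j, hj⟩ := Finite.exists_max
      (fun i => |((q - p : ℕ) : ℝ) * a i - (round (((q - p : ℕ) : ℝ) * a i) : ℝ)|)
    exact lt_of_le_of_lt (ciSup_le hj) (hpt j)
  · -- sup of |round| equals l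
    set l := q - p with hl
    have hlR : (0 : ℝ) ≤ (l : ℝ) := Nat.cast_nonneg _
    have hub : ∀ i, |((round ((l : ℝ) * a i) : ℤ) : ℝ)| ≤ (l : ℝ) := by
      intro i
      have h1 : |(l : ℝ) * a i - (round ((l : ℝ) * a i) : ℝ)| ≤ 1 / 2 := abs_sub_round _
      have h2 : |(l : ℝ) * a i| ≤ l := by
        rw [abs_mul, abs_of_nonneg hlR]
        nlinarith [hbd i, abs_nonneg (a i)]
      have h3 : |((round ((l : ℝ) * a i) : ℤ) : ℝ)| ≤ (l : ℝ) + 1 / 2 := by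
        have := abs_sub_abs_le_abs_sub ((round ((l : ℝ) * a i) : ℝ)) ((l : ℝ) * a i)
        rw [abs_sub_comm] at h1
        linarith
      have h4 : |round ((l : ℝ) * a i)| ≤ (l : ℤ) := by
        have : (|round ((l : ℝ) * a i)| : ℝ) ≤ (l : ℝ) + 1 / 2 := by push_cast at h3 ⊢; exact h3
        by_contra hc
        push_neg at hc
        have : ((l : ℤ) + 1 : ℝ) ≤ (|round ((l : ℝ) * a i)| : ℝ) := by
          exact_mod_cast Int.add_one_le_of_lt hc
        push_cast at this
        linarith
      calc |((round ((l : ℝ) * a i) : ℤ) : ℝ)| = ((|round ((l : ℝ) * a i)| : ℤ) : ℝ) := by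
            push_cast; ring
        _ ≤ ((l : ℤ) : ℝ) := by exact_mod_cast h4
        _ = (l : ℝ) := by push_cast; ring
    have hval : |((round ((l : ℝ) * a i0) : ℤ) : ℝ)| = (l : ℝ) := by
      rcases abs_eq (by norm_num : (0:ℝ) ≤ 1) |>.mp hi0' with h | h
      · rw [h, mul_one]
        simp
      · rw [h, mul_neg_one]
        rw [show -(l : ℝ) = ((-(l : ℤ) : ℤ) : ℝ) by push_cast; ring, round_intCast]
        push_cast
        simp [abs_of_nonneg hlR]
    apply le_antisymm
    · exact ciSup_le hub
    · calc (l : ℝ) = |((round ((l : ℝ) * a i0) : ℤ) : ℝ)| := hval.symm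
        _ ≤ _ := le_ciSup (Set.Finite.bddAbove (Set.finite_range fun i => |((round ((l : ℝ) * a i) : ℤ) : ℝ)|)) i0
end

section
/- Let K ⊆ ℝⁿ be a compact convex set and P = {x ∈ ℝⁿ : Ax ≤ b} with A ∈ ℝ^{m×n}, b ∈ ℝ^m. Then K ∩ P = ∅ if and only if there exists λ ∈ ℝ^m with λ ≥ 0 such that min_{x ∈ K} λᵀ(Ax − b) > 0. -/
/-!
The affine map `x ↦ A x - b` sends `K` to a compact convex set in `ℝᵐ`, and `K ∩ P = ∅` says
exactly that this image misses the nonpositive orthant. Since the orthant is a closed convex cone,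
the image can be strictly separated from it by a linear functional that is positive on the image
and nonpositive on the orthant; its coefficients in the standard basis are the certificate `λ ≥ 0`.
-/

open Finset

theorem IsCompact.disjoint_Iic_zero_iff_exists_nonneg_weights {ι : Type*} [Fintype ι]
    {K : Set (ι → ℝ)} (hK : IsCompact K) (hconv : Convex ℝ K) :
    Disjoint K (Set.Iic 0) ↔ ∃ lam : ι → ℝ, (∀ i, 0 ≤ lam i) ∧ ∀ y ∈ K, 0 < ∑ i, lam i * y i := by
  classical
  constructor
  · intro hdisj
    have hneg : Disjoint (-K) (ProperCone.positive ℝ (ι → ℝ)) :=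
      Set.disjoint_left.mpr fun y hy hy0 =>
        Set.disjoint_left.mp hdisj hy (show -y ≤ 0 from neg_nonpos.mpr hy0)
    obtain ⟨f, hf_nonneg, hf_neg⟩ :=
      (ProperCone.positive ℝ (ι → ℝ)).hyperplane_separation hconv.neg hK.neg hneg
    set lam : ι → ℝ := fun i => f (Pi.single i 1)
    have hf_apply (y : ι → ℝ) : f y = ∑ i, lam i * y i := by
      conv_lhs => rw [pi_eq_sum_univ' y]
      simp [lam, mul_comm]
    refine ⟨lam, fun i => hf_nonneg _ (Pi.single_nonneg.mpr zero_le_one), fun y hy => ?_⟩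
    have hfy := hf_neg (-y) (by simpa using hy)
    rw [map_neg, hf_apply] at hfy
    linarith
  · rintro ⟨lam, hlam, hpos⟩
    refine Set.disjoint_left.mpr fun y hyK hy0 => (hpos y hyK).not_ge ?_
    exact Finset.sum_nonpos fun i _ => mul_nonpos_of_nonneg_of_nonpos (hlam i) (hy0 i)

def residualMap {ι κ : Type*} [Fintype ι] (A : κ → ι → ℝ) (b : κ → ℝ) :
    (ι → ℝ) →ᵃ[ℝ] (κ → ℝ) where
  toFun x i := ∑ j, A i j * x j - b i
  linear := Matrix.mulVecLin A
  map_vadd' x v := by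
    ext i
    change ∑ j, A i j * (v + x) j - b i = Matrix.mulVec A v i + (∑ j, A i j * x j - b i)
    simp only [Pi.add_apply, Matrix.mulVec, dotProduct, mul_add, sum_add_distrib]
    ring

@[simp]
lemma residualMap_apply {ι κ : Type*} [Fintype ι] (A : κ → ι → ℝ) (b : κ → ℝ) (x : ι → ℝ)
    (i : κ) : residualMap A b x i = ∑ j, A i j * x j - b i :=
  rfl

/-- Generalized Farkas certificates (Lemma 2.7, first part):
for compact convex `K` and polyhedron `P = {x : Ax ≤ b}`,
`K ∩ P = ∅` iff there is `λ ≥ 0` with `λᵀ(Ax − b) > 0` for all `x ∈ K`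
(equivalently, `min_{x∈K} λᵀ(Ax − b) > 0`). -/
theorem stmt1 (n m : ℕ) (K : Set (Fin n → ℝ)) (hK : IsCompact K)
    (hconv : Convex ℝ K) (A : Fin m → Fin n → ℝ) (b : Fin m → ℝ) :
    K ∩ {x | ∀ i, ∑ j, A i j * x j ≤ b i} = ∅ ↔
      ∃ lam : Fin m → ℝ, (∀ i, 0 ≤ lam i) ∧
        ∀ x ∈ K, 0 < ∑ i, lam i * ((∑ j, A i j * x j) - b i) := by
  have hP : {x | ∀ i, ∑ j, A i j * x j ≤ b i} = residualMap A b ⁻¹' Set.Iic 0 := by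
    ext x
    simp [Pi.le_def]
  have hKimage : IsCompact (residualMap A b '' K) :=
    hK.image (residualMap A b).continuous_of_finiteDimensional
  rw [hP, ← Set.disjoint_iff_inter_eq_empty, ← Set.disjoint_image_left,
    hKimage.disjoint_Iic_zero_iff_exists_nonneg_weights (hconv.affine_image _)]
  simp
end

section
/- Let K ⊆ ℝⁿ be a compact convex set and P = {x : Ax ≤ b} a polyhedron with K ∩ P = ∅. If there exists a generalized Farkas certificate λ ∈ ℝ^m_+ (i.e., min_{x∈K} λᵀ(Ax−b) > 0), then there exists such a certificate with at most n+1 non-zero coordinates. -/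
open Finset Module

lemma sparsify_aux {ι V : Type*} [Fintype ι] [DecidableEq ι] [AddCommGroup V]
    [Module ℝ V] [FiniteDimensional ℝ V] (u : ι → V) :
    ∀ (N : ℕ) (s : Finset ι) (lam : ι → ℝ), s.card ≤ N → (∀ i, 0 ≤ lam i) →
      (∀ i ∉ s, lam i = 0) →
      ∃ lam' : ι → ℝ, (∀ i, 0 ≤ lam' i) ∧
        (∑ i, lam' i • u i = ∑ i, lam i • u i) ∧
        ∃ t : Finset ι, t.card ≤ finrank ℝ V ∧ ∀ i ∉ t, lam' i = 0 := by
  intro N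
  induction N with
  | zero =>
    intro s lam hs h0 hvan
    have hse : s = ∅ := Finset.card_eq_zero.mp (Nat.le_zero.mp hs)
    exact ⟨lam, h0, rfl, ∅, by simp, fun i _ => hvan i (by simp [hse])⟩
  | succ N IH =>
    intro s lam hs h0 hvan
    by_cases hcard : s.card ≤ finrank ℝ V
    · exact ⟨lam, h0, rfl, s, hcard, hvan⟩
    push_neg at hcard
    have hdep : ¬ LinearIndependent ℝ (fun i : s => u i) := by
      intro h
      have := h.fintype_card_le_finrank
      rw [Fintype.card_coe] at this
      omega
    rw [Fintype.not_linearIndependent_iff] at hdep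
    obtain ⟨g, hg0, j, hj⟩ := hdep
    set c : ι → ℝ := fun i => if h : i ∈ s then g ⟨i, h⟩ else 0 with hc
    have hcs : ∀ i ∉ s, c i = 0 := fun i hi => by simp [hc, hi]
    have hcsum : ∑ i, c i • u i = 0 := by
      have h1 : ∑ i, c i • u i = ∑ i ∈ s, c i • u i :=
        (Finset.sum_subset s.subset_univ (fun i _ hi => by rw [hcs i hi, zero_smul])).symm
      rw [h1, ← Finset.sum_attach s (fun i => c i • u i), ← hg0,
        Finset.univ_eq_attach]
      exact Finset.sum_congr rfl fun i _ => by simp [hc]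
    have hcj : c (↑j) ≠ 0 := by simpa [hc] using hj
    have main : ∀ c' : ι → ℝ, (∑ i, c' i • u i = 0) → (∀ i ∉ s, c' i = 0) →
        (∃ i, 0 < c' i) →
        ∃ lam' : ι → ℝ, (∀ i, 0 ≤ lam' i) ∧
          (∑ i, lam' i • u i = ∑ i, lam i • u i) ∧
          ∃ t : Finset ι, t.card ≤ finrank ℝ V ∧ ∀ i ∉ t, lam' i = 0 := by
      intro c' hsum hvc ⟨i1, hi1⟩
      have hi1s : i1 ∈ s := by
        by_contra h; rw [hvc i1 h] at hi1; exact lt_irrefl 0 hi1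
      set T := s.filter (fun i => 0 < c' i) with hT
      have hTne : T.Nonempty := ⟨i1, Finset.mem_filter.mpr ⟨hi1s, hi1⟩⟩
      obtain ⟨i0, hi0, hmin⟩ := Finset.exists_min_image T (fun i => lam i / c' i) hTne
      have hc0 : 0 < c' i0 := (Finset.mem_filter.mp hi0).2
      have hi0s : i0 ∈ s := (Finset.mem_filter.mp hi0).1
      set t0 := lam i0 / c' i0 with ht0
      have ht0n : 0 ≤ t0 := div_nonneg (h0 i0) hc0.le
      set lam' : ι → ℝ := fun i => lam i - t0 * c' i with hlam'
      have hnn : ∀ i, 0 ≤ lam' i := by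
        intro i
        by_cases hci : 0 < c' i
        · have his : i ∈ s := by
            by_contra h; rw [hvc i h] at hci; exact lt_irrefl 0 hci
          have hm := hmin i (Finset.mem_filter.mpr ⟨his, hci⟩)
          have h2 : t0 * c' i ≤ lam i := by
            calc t0 * c' i ≤ (lam i / c' i) * c' i := by nlinarith
              _ = lam i := div_mul_cancel₀ _ hci.ne'
          simp only [hlam']; linarith
        · push_neg at hci
          have h2 : t0 * c' i ≤ 0 := mul_nonpos_of_nonneg_of_nonpos ht0n hci
          simp only [hlam']; nlinarith [h0 i]
      have hsum' : ∑ i, lam' i • u i = ∑ i, lam i • u i := by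
        simp only [hlam', sub_smul, mul_smul, Finset.sum_sub_distrib]
        rw [← Finset.smul_sum, hsum, smul_zero, sub_zero]
      have hz : lam' i0 = 0 := by
        simp only [hlam', ht0]
        rw [div_mul_cancel₀ _ hc0.ne']
        ring
      have hvan' : ∀ i ∉ s.erase i0, lam' i = 0 := by
        intro i hi
        by_cases h : i = i0
        · subst h; exact hz
        · have his : i ∉ s := fun hmem => hi (Finset.mem_erase.mpr ⟨h, hmem⟩)
          simp [hlam', hvc i his, hvan i his]
      have hcarde : (s.erase i0).card ≤ N := by
        have := Finset.card_erase_of_mem hi0s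
        have hpos : 1 ≤ s.card := Finset.card_pos.mpr ⟨i0, hi0s⟩
        omega
      obtain ⟨lam'', h1, h2, t, h3, h4⟩ := IH (s.erase i0) lam' hcarde hnn hvan'
      exact ⟨lam'', h1, h2.trans hsum', t, h3, h4⟩
    rcases hcj.lt_or_gt with h | h
    · refine main (-c) (by simp [neg_smul, hcsum]) (fun i hi => by simp [hcs i hi])
        ⟨↑j, by simpa using h⟩
    · exact main c hcsum hcs ⟨↑j, h⟩

/-- Sparsification of generalized Farkas certificates (Lemma 2.7, second part):
if `K ∩ P = ∅` admits a generalized Farkas certificate, then it admits one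
with at most `n+1` non-zero coordinates. -/
theorem stmt2 (n m : ℕ) (K : Set (Fin n → ℝ)) (hK : IsCompact K)
    (hconv : Convex ℝ K) (A : Fin m → Fin n → ℝ) (b : Fin m → ℝ)
    (hPK : K ∩ {x | ∀ i, ∑ j, A i j * x j ≤ b i} = ∅)
    (hcert : ∃ lam : Fin m → ℝ, (∀ i, 0 ≤ lam i) ∧
      ∀ x ∈ K, 0 < ∑ i, lam i * ((∑ j, A i j * x j) - b i)) :
    ∃ lam : Fin m → ℝ, (∀ i, 0 ≤ lam i) ∧
      (∀ x ∈ K, 0 < ∑ i, lam i * ((∑ j, A i j * x j) - b i)) ∧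
      ∃ s : Finset (Fin m), s.card ≤ n + 1 ∧ ∀ i ∉ s, lam i = 0 := by
  obtain ⟨lam, hnn, hpos⟩ := hcert
  have hrank : finrank ℝ ((Fin n → ℝ) × ℝ) = n + 1 := by
    simp [finrank_prod]
  obtain ⟨lam', h1, h2, t, h3, h4⟩ :=
    sparsify_aux (fun i => ((A i, b i) : (Fin n → ℝ) × ℝ)) m Finset.univ lam
      (by simp) hnn (by simp)
  refine ⟨lam', h1, ?_, t, by rw [hrank] at h3; exact h3, h4⟩
  intro x hx
  let L : ((Fin n → ℝ) × ℝ) →ₗ[ℝ] ℝ :=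
    { toFun := fun v => (∑ j, v.1 j * x j) - v.2
      map_add' := by
        intro a b
        simp [add_mul, Finset.sum_add_distrib]
        ring
      map_smul' := by
        intro r a
        simp [Finset.mul_sum, mul_sub, mul_assoc] }
  have key : ∑ i, lam' i * ((∑ j, A i j * x j) - b i)
      = ∑ i, lam i * ((∑ j, A i j * x j) - b i) := by
    have h := congrArg L h2
    simp only [map_sum, map_smul, smul_eq_mul] at h
    simpa [L, mul_sub, Finset.mul_sum, Finset.sum_sub_distrib, mul_assoc] using h
  rw [key]
  exact hpos x hx
end

section
/- Let K ⊆ ℝⁿ be a compact convex set, P = {x : Ax ≤ b} a polyhedron with P ∩ K = ∅, and for ε ∈ ℝ^m define P_ε = {x : Ax ≤ b + ε}. Then for any ε ∈ ℝ^m, either K ∩ P_ε = ∅, or there exists an index j ∈ [m] such that ε_j > 0 and K ∩ P_{ε − (n+1)ε_j e_j} = ∅. -/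
open Finset Module

/-- Lemma 2.9: for compact convex `K` and polyhedron `P = {x : Ax ≤ b}` with
`K ∩ P = ∅`, and any perturbation `ε ∈ ℝ^m`, either `K ∩ P_ε = ∅`, or there
is `j` with `ε_j > 0` and `K ∩ P_{ε − (n+1)ε_j e_j} = ∅`. -/
theorem stmt3 (n m : ℕ) (K : Set (Fin n → ℝ)) (hK : IsCompact K)
    (hconv : Convex ℝ K) (A : Fin m → Fin n → ℝ) (b : Fin m → ℝ)
    (hPK : K ∩ {x | ∀ i, ∑ j, A i j * x j ≤ b i} = ∅)
    (ε : Fin m → ℝ) :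
    K ∩ {x | ∀ i, ∑ j, A i j * x j ≤ b i + ε i} = ∅ ∨
      ∃ j : Fin m, 0 < ε j ∧
        K ∩ {x | ∀ i, ∑ k, A i k * x k ≤
          b i + (ε i - (if i = j then ((n : ℝ) + 1) * ε j else 0))} = ∅ := by
  classical
  by_cases hL : K ∩ {x | ∀ i, ∑ j, A i j * x j ≤ b i + ε i} = ∅
  · exact Or.inl hL
  right
  obtain ⟨x₀, hx₀K, hx₀⟩ := Set.nonempty_iff_ne_empty.2 hL
  by_cases hm : m = 0
  · exfalso
    subst hm
    have h0 : x₀ ∈ K ∩ {x | ∀ i, ∑ j, A i j * x j ≤ b i} := ⟨hx₀K, fun i => i.elim0⟩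
    rw [hPK] at h0; exact h0
  have : Nonempty (Fin m) := ⟨⟨0, Nat.pos_of_ne_zero hm⟩⟩
  set F : Fin m → Set (Fin n → ℝ) := fun i => K ∩ {x | ∑ k, A i k * x k ≤ b i} with hF
  have hconvF : ∀ i, Convex ℝ (F i) := by
    intro i
    refine hconv.inter (convex_halfSpace_le ?_ _)
    exact { map_add := by intro x y; simp [mul_add, Finset.sum_add_distrib]
            map_smul := by
              intro c x
              simp [Finset.mul_sum, smul_eq_mul, mul_left_comm] }
  have hempty : ¬ (⋂ i ∈ (univ : Finset (Fin m)), F i).Nonempty := by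
    rintro ⟨y, hy⟩
    simp only [Set.mem_iInter] at hy
    have hyK : y ∈ K := (hy (Classical.arbitrary _) (mem_univ _)).1
    have h0 : y ∈ K ∩ {x | ∀ i, ∑ j, A i j * x j ≤ b i} :=
      ⟨hyK, fun i => (hy i (mem_univ i)).2⟩
    rw [hPK] at h0; exact h0
  have hHelly : ∃ I ⊆ (univ : Finset (Fin m)), #I ≤ n + 1 ∧ ¬ (⋂ i ∈ I, F i).Nonempty := by
    by_contra hcon
    push_neg at hcon
    refine hempty (Convex.helly_theorem' (fun i _ => hconvF i) ?_)
    intro I hI hcard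
    refine hcon I hI ?_
    rwa [finrank_fintype_fun_eq_card, Fintype.card_fin] at hcard
  obtain ⟨I, -, hIcard, hIempty⟩ := hHelly
  set J : Finset (Fin m) := I.filter (fun i => 0 < ε i) with hJ
  have hJcard : (#J : ℝ) ≤ (n : ℝ) + 1 := by
    have h1 : #J ≤ #I := card_le_card (filter_subset _ _)
    exact_mod_cast h1.trans hIcard
  by_contra hcon
  push_neg at hcon
  have hpt : ∀ j, 0 < ε j → ∃ y, y ∈ K ∧ ∀ i, ∑ k, A i k * y k ≤
      b i + (ε i - (if i = j then ((n : ℝ) + 1) * ε j else 0)) := by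
    intro j hj
    obtain ⟨y, hy1, hy2⟩ := hcon j hj
    exact ⟨y, hy1, hy2⟩
  choose! y hyK hyle using hpt
  rcases eq_or_ne J ∅ with hJe | hJne
  · -- all ε i ≤ 0 on I: x₀ is in the intersection
    refine hIempty ⟨x₀, Set.mem_iInter₂.2 fun i hi => ⟨hx₀K, ?_⟩⟩
    have hεi : ε i ≤ 0 := by
      by_contra h
      push_neg at h
      have : i ∈ J := mem_filter.2 ⟨hi, h⟩
      simp [hJe] at this
    have h := hx₀ i
    show ∑ k, A i k * x₀ k ≤ b i
    linarith
  · have hJpos : 0 < (#J : ℝ) := by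
      have : 0 < #J := card_pos.2 (nonempty_iff_ne_empty.2 hJne)
      exact_mod_cast this
    set c : ℝ := (#J : ℝ)⁻¹ with hc
    have hc0 : 0 ≤ c := inv_nonneg.2 hJpos.le
    have hcsum : ∑ _j ∈ J, c = 1 := by
      rw [Finset.sum_const, nsmul_eq_mul, hc, mul_inv_cancel₀ hJpos.ne']
    set z : Fin n → ℝ := ∑ j ∈ J, c • y j with hz
    have hεJ : ∀ j ∈ J, 0 < ε j := fun j hj => (mem_filter.1 hj).2
    have hzK : z ∈ K :=
      hconv.sum_mem (fun j _ => hc0) hcsum (fun j hj => hyK j (hεJ j hj))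
    refine hIempty ⟨z, Set.mem_iInter₂.2 fun i hi => ⟨hzK, ?_⟩⟩
    show ∑ k, A i k * z k ≤ b i
    have hrw : ∑ k, A i k * z k = ∑ j ∈ J, c * ∑ k, A i k * y j k := by
      simp only [hz, Finset.sum_apply, Pi.smul_apply, smul_eq_mul, Finset.mul_sum]
      rw [Finset.sum_comm]
      exact Finset.sum_congr rfl fun j _ => Finset.sum_congr rfl fun k _ => by ring
    have hbound : ∀ j ∈ J, ∑ k, A i k * y j k ≤
        b i + ε i - (if i = j then ((n : ℝ) + 1) * ε i else 0) := by
      intro j hj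
      have h := hyle j (hεJ j hj) i
      rcases eq_or_ne i j with rfl | hij
      · simp only [if_pos rfl] at h ⊢
        linarith
      · simp only [if_neg hij] at h ⊢
        linarith
    have hsum : ∑ j ∈ J, (b i + ε i - (if i = j then ((n : ℝ) + 1) * ε i else 0))
        = #J * (b i + ε i) - (if i ∈ J then ((n : ℝ) + 1) * ε i else 0) := by
      rw [Finset.sum_sub_distrib, Finset.sum_const, Finset.sum_ite_eq, nsmul_eq_mul]
    have hkey : ∑ j ∈ J, (b i + ε i - (if i = j then ((n : ℝ) + 1) * ε i else 0))
        ≤ #J * b i := by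
      rw [hsum]
      by_cases hiJ : i ∈ J
      · have hεi : 0 < ε i := hεJ i hiJ
        simp only [hiJ, if_true]
        nlinarith
      · have hεi : ε i ≤ 0 := by
          by_contra h
          push_neg at h
          exact hiJ (mem_filter.2 ⟨hi, h⟩)
        simp only [hiJ, if_false]
        nlinarith
    calc ∑ k, A i k * z k = ∑ j ∈ J, c * ∑ k, A i k * y j k := hrw
      _ ≤ ∑ j ∈ J, c * (b i + ε i - (if i = j then ((n : ℝ) + 1) * ε i else 0)) :=
          Finset.sum_le_sum fun j hj => mul_le_mul_of_nonneg_left (hbound j hj) hc0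
      _ = c * ∑ j ∈ J, (b i + ε i - (if i = j then ((n : ℝ) + 1) * ε i else 0)) :=
          (Finset.mul_sum _ _ _).symm
      _ ≤ c * (#J * b i) := mul_le_mul_of_nonneg_left hkey hc0
      _ = b i := by
          rw [hc]
          field_simp
end

section
/- Let K ⊆ ℝⁿ be a non-empty compact set, c ∈ ℤⁿ with h_K(c) ∈ ℤ, and let F = F_K(c) be the face of maximizers of c over K. Then for any a ∈ ℤⁿ there exists N ≥ 0 such that for all integers i ≥ N, {x : (a + i·c)·x ≤ ⌊h_K(a + i·c)⌋} ∩ {x : c·x = h_K(c)} = {x : a·x ≤ ⌊h_F(a)⌋} ∩ {x : c·x = h_K(c)}. -/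
lemma linf_cont (n : ℕ) (v : Fin n → ℝ) :
    Continuous (fun x : Fin n → ℝ => ∑ j, v j * x j) :=
  continuous_finset_sum _ fun j _ => continuous_const.mul (continuous_apply j)

lemma attain (n : ℕ) (K : Set (Fin n → ℝ)) (hne : K.Nonempty) (hK : IsCompact K)
    (f : (Fin n → ℝ) → ℝ) (hf : Continuous f) :
    ∃ x ∈ K, sSup (f '' K) = f x ∧ ∀ y ∈ K, f y ≤ f x := by
  obtain ⟨x, hxK, hx⟩ := hK.exists_isMaxOn hne hf.continuousOn
  refine ⟨x, hxK, ?_, fun y hy => hx hy⟩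
  refine IsGreatest.csSup_eq ⟨Set.mem_image_of_mem _ hxK, ?_⟩
  rintro _ ⟨y, hy, rfl⟩; exact hx hy

/-- Lifting lemma for a single CG cut (Lemma 2.11): for nonempty compact `K`,
`c ∈ ℤⁿ` with `h_K(c) ∈ ℤ` and `F = F_K(c)`, for any `a ∈ ℤⁿ` there is `N` such
that for all `i ≥ N`, the CG cut of `K` induced by `a + i·c`, restricted to the
hyperplane `c·x = h_K(c)`, equals the CG cut of `F` induced by `a` restricted to
that hyperplane. -/
theorem stmt5 (n : ℕ) (K : Set (Fin n → ℝ)) (hne : K.Nonempty) (hK : IsCompact K)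
    (c : Fin n → ℤ) (z : ℤ)
    (hz : sSup ((fun x => ∑ j, (c j : ℝ) * x j) '' K) = (z : ℝ))
    (a : Fin n → ℤ) :
    ∃ N : ℕ, ∀ i : ℕ, N ≤ i →
      {x : Fin n → ℝ | ∑ j, ((a j : ℝ) + (i : ℝ) * (c j : ℝ)) * x j ≤
          (⌊sSup ((fun x => ∑ j, ((a j : ℝ) + (i : ℝ) * (c j : ℝ)) * x j) '' K)⌋ : ℝ)} ∩
        {x | ∑ j, (c j : ℝ) * x j = (z : ℝ)} =
      {x : Fin n → ℝ | ∑ j, (a j : ℝ) * x j ≤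
          (⌊sSup ((fun x => ∑ j, (a j : ℝ) * x j) ''
            (K ∩ {x | ∑ j, (c j : ℝ) * x j = (z : ℝ)}))⌋ : ℝ)} ∩
        {x | ∑ j, (c j : ℝ) * x j = (z : ℝ)} := by
  set fc : (Fin n → ℝ) → ℝ := fun x => ∑ j, (c j : ℝ) * x j with hfc
  set fa : (Fin n → ℝ) → ℝ := fun x => ∑ j, (a j : ℝ) * x j with hfa
  have hfcc : Continuous fc := linf_cont n _
  have hfac : Continuous fa := linf_cont n _
  -- sum decomposition
  have hsum : ∀ (i : ℕ) (x : Fin n → ℝ),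
      (∑ j, ((a j : ℝ) + (i : ℝ) * (c j : ℝ)) * x j) = fa x + (i : ℝ) * fc x := by
    intro i x
    simp only [hfa, hfc, Finset.mul_sum]
    rw [← Finset.sum_add_distrib]
    congr 1; ext j; ring
  -- z is an upper bound of fc on K
  obtain ⟨x0, hx0K, hx0eq, hx0max⟩ := attain n K hne hK fc hfcc
  have hx0z : fc x0 = (z : ℝ) := by rw [← hx0eq, hz]
  have hcle : ∀ x ∈ K, fc x ≤ (z : ℝ) := fun x hx => hx0z ▸ hx0max x hx
  -- the face F
  set F : Set (Fin n → ℝ) := K ∩ {x | fc x = (z : ℝ)} with hF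
  have hFne : F.Nonempty := ⟨x0, hx0K, hx0z⟩
  have hFcl : IsClosed {x : Fin n → ℝ | fc x = (z : ℝ)} :=
    isClosed_eq hfcc continuous_const
  have hFcp : IsCompact F := hK.inter_right hFcl
  obtain ⟨xF, hxFF, hxFeq, hxFmax⟩ := attain n F hFne hFcp fa hfac
  set hFa : ℝ := sSup (fa '' F) with hhFa
  have hFle : ∀ x ∈ F, fa x ≤ hFa := fun x hx => hxFeq ▸ hxFmax x hx
  set t : ℝ := (⌊hFa⌋ : ℝ) + 1 with ht
  have hFlt : hFa < t := Int.lt_floor_add_one hFa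
  -- M : bound of fa on K
  obtain ⟨xM, hxMK, hxMeq, hxMmax⟩ := attain n K hne hK fa hfac
  set M : ℝ := fa xM with hM
  have hMle : ∀ x ∈ K, fa x ≤ M := hxMmax
  -- find δ
  have hdelta : ∃ δ : ℝ, 0 < δ ∧ ∀ x ∈ K, (z : ℝ) - δ < fc x → fa x < t := by
    set S : Set (Fin n → ℝ) := K ∩ {x | t ≤ fa x} with hS
    rcases Set.eq_empty_or_nonempty S with hSe | hSne
    · refine ⟨1, one_pos, fun x hx _ => ?_⟩
      by_contra h
      have hxS : x ∈ S := ⟨hx, le_of_not_gt h⟩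
      rw [hSe] at hxS
      exact hxS
    · have hScl : IsClosed {x : Fin n → ℝ | t ≤ fa x} :=
        isClosed_le continuous_const hfac
      have hScp : IsCompact S := hK.inter_right hScl
      obtain ⟨xS, hxSS, _, hxSmax⟩ := attain n S hSne hScp fc hfcc
      have hxSK : xS ∈ K := hxSS.1
      have hm : fc xS < (z : ℝ) := by
        rcases lt_or_eq_of_le (hcle xS hxSK) with h | h
        · exact h
        · exfalso
          have : fa xS ≤ hFa := hFle xS ⟨hxSK, h⟩
          exact absurd hxSS.2 (not_le.mpr (lt_of_le_of_lt this hFlt))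
      refine ⟨(z : ℝ) - fc xS, by linarith, fun x hx hlt => ?_⟩
      by_contra h
      have hxs : x ∈ S := ⟨hx, le_of_not_gt h⟩
      have := hxSmax x hxs
      linarith
  obtain ⟨δ, hδpos, hδ⟩ := hdelta
  obtain ⟨N, hN⟩ := exists_nat_gt ((M - t) / δ)
  refine ⟨N, fun i hi => ?_⟩
  have hiN : ((M - t) / δ) < (i : ℝ) := lt_of_lt_of_le hN (by exact_mod_cast hi)
  have hMi : M - (i : ℝ) * δ < t := by
    have := (div_lt_iff₀ hδpos).mp hiN
    nlinarith
  -- key floor computation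
  have hcast : ((i : ℝ)) * (z : ℝ) = (((i : ℤ) * z : ℤ) : ℝ) := by push_cast; ring
  set g : (Fin n → ℝ) → ℝ := fun x => ∑ j, ((a j : ℝ) + (i : ℝ) * (c j : ℝ)) * x j with hg
  have hgc : Continuous g := linf_cont n _
  obtain ⟨xg, hxgK, hxgeq, hxgmax⟩ := attain n K hne hK g hgc
  have hgub : sSup (g '' K) < t + (i : ℝ) * (z : ℝ) := by
    rw [hxgeq, hg]
    show (∑ j, ((a j : ℝ) + (i : ℝ) * (c j : ℝ)) * xg j) < _
    rw [hsum i xg]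
    rcases lt_or_ge ((z : ℝ) - δ) (fc xg) with h | h
    · have h1 : fa xg < t := hδ xg hxgK h
      have h2 : fc xg ≤ (z : ℝ) := hcle xg hxgK
      nlinarith [Nat.cast_nonneg (α := ℝ) i]
    · have h1 : fa xg ≤ M := hMle xg hxgK
      nlinarith [Nat.cast_nonneg (α := ℝ) i]
  have hglb : hFa + (i : ℝ) * (z : ℝ) ≤ sSup (g '' K) := by
    have hxFK : xF ∈ K := hxFF.1
    have hgxF : g xF = fa xF + (i : ℝ) * (z : ℝ) := by
      rw [hg]; show (∑ j, ((a j : ℝ) + (i : ℝ) * (c j : ℝ)) * xF j) = _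
      rw [hsum i xF, hxFF.2]
    calc hFa + (i : ℝ) * (z : ℝ) = g xF := by rw [hgxF, hxFeq]
      _ ≤ g xg := hxgmax xF hxFK
      _ = sSup (g '' K) := hxgeq.symm
  have hkey : ⌊sSup (g '' K)⌋ = ⌊hFa⌋ + (i : ℤ) * z := by
    have hub : ⌊sSup (g '' K)⌋ < ⌊hFa⌋ + (i : ℤ) * z + 1 := by
      rw [Int.floor_lt]
      calc sSup (g '' K) < t + (i : ℝ) * (z : ℝ) := hgub
        _ = ((⌊hFa⌋ + (i : ℤ) * z + 1 : ℤ) : ℝ) := by push_cast [ht]; ring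
    have hlb : ⌊hFa⌋ + (i : ℤ) * z ≤ ⌊sSup (g '' K)⌋ := by
      have : (((⌊hFa⌋ + (i : ℤ) * z : ℤ)) : ℝ) ≤ sSup (g '' K) := by
        calc (((⌊hFa⌋ + (i : ℤ) * z : ℤ)) : ℝ) = (⌊hFa⌋ : ℝ) + (i : ℝ) * (z : ℝ) := by
              push_cast; ring
          _ ≤ hFa + (i : ℝ) * (z : ℝ) := by linarith [Int.floor_le hFa]
          _ ≤ _ := hglb
      exact Int.le_floor.mpr this
    omega
  -- final set equality
  ext x
  simp only [Set.mem_inter_iff, Set.mem_setOf_eq]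
  constructor
  · rintro ⟨h1, h2⟩
    refine ⟨?_, h2⟩
    have h2' : fc x = (z : ℝ) := h2
    have h1' : fa x + (i : ℝ) * (z : ℝ) ≤ (⌊hFa⌋ : ℝ) + (i : ℝ) * (z : ℝ) := by
      have := h1
      rw [hsum i x, h2'] at this
      calc fa x + (i : ℝ) * (z : ℝ) ≤ (⌊sSup (g '' K)⌋ : ℝ) := this
        _ = (⌊hFa⌋ : ℝ) + (i : ℝ) * (z : ℝ) := by rw [hkey]; push_cast; ring
    linarith
  · rintro ⟨h1, h2⟩
    refine ⟨?_, h2⟩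
    have h2' : fc x = (z : ℝ) := h2
    show (∑ j, ((a j : ℝ) + (i : ℝ) * (c j : ℝ)) * x j) ≤ (⌊sSup (g '' K)⌋ : ℝ)
    rw [hsum i x, h2', hkey]
    push_cast
    linarith
end

section
/- Let K ⊆ ℝⁿ be a non-empty compact set, c ∈ ℤⁿ with h_K(c) ∈ ℤ, F = F_K(c), and a_1,…,a_k ∈ ℤⁿ. Then there exist nonnegative integers n_1,…,n_k such that CG(K, (a_1+n_1·c, …, a_k+n_k·c)) ∩ {x : c·x = h_K(c)} = CG(F, (a_1,…,a_k)), where CG(S, L) denotes the result of sequentially applying the CG cuts induced by the list L to the set S. -/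
/-- The CG cut of `S` induced by `w`: `S ∩ {x : w·x ≤ ⌊h_S(w)⌋}`. -/
noncomputable def cgCut {n : ℕ} (S : Set (Fin n → ℝ)) (w : Fin n → ℝ) :
    Set (Fin n → ℝ) :=
  S ∩ {x | ∑ j, w j * x j ≤ (⌊sSup ((fun x => ∑ j, w j * x j) '' S)⌋ : ℝ)}

/-- Sequential application of CG cuts, left to right. -/
noncomputable def cgList {n : ℕ} (S : Set (Fin n → ℝ)) (L : List (Fin n → ℝ)) :
    Set (Fin n → ℝ) :=
  L.foldl cgCut S

namespace CGAux

variable {n : ℕ}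

def lin (w : Fin n → ℝ) : (Fin n → ℝ) → ℝ := fun x => ∑ j, w j * x j

lemma lin_cont (w : Fin n → ℝ) : Continuous (lin w) := by
  unfold lin; fun_prop

lemma cgCut_def (S : Set (Fin n → ℝ)) (w : Fin n → ℝ) :
    cgCut S w = S ∩ {x | lin w x ≤ (⌊sSup (lin w '' S)⌋ : ℝ)} := rfl

lemma cgCut_empty (w : Fin n → ℝ) : cgCut (∅ : Set (Fin n → ℝ)) w = ∅ := by
  simp [cgCut]

lemma cgList_empty (L : List (Fin n → ℝ)) : cgList (∅ : Set (Fin n → ℝ)) L = ∅ := by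
  induction L with
  | nil => rfl
  | cons h t ih => simp [cgList, List.foldl_cons, cgCut_empty] at *; exact ih

lemma cgCut_subset (S : Set (Fin n → ℝ)) (w : Fin n → ℝ) : cgCut S w ⊆ S :=
  Set.inter_subset_left

lemma cgList_subset (L : List (Fin n → ℝ)) (S : Set (Fin n → ℝ)) : cgList S L ⊆ S := by
  induction L generalizing S with
  | nil => exact fun x hx => hx
  | cons h t ih => exact (ih (cgCut S h)).trans (cgCut_subset S h)

lemma cgCut_isCompact {S : Set (Fin n → ℝ)} (hS : IsCompact S) (w : Fin n → ℝ) :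
    IsCompact (cgCut S w) :=
  hS.inter_right (isClosed_le (lin_cont w) continuous_const)

lemma lin_add (a c : Fin n → ℝ) (N : ℝ) (x : Fin n → ℝ) :
    lin (fun j => a j + N * c j) x = lin a x + N * lin c x := by
  simp [lin, add_mul, Finset.sum_add_distrib, Finset.mul_sum, mul_assoc]

lemma exists_max {S : Set (Fin n → ℝ)} (hS : IsCompact S) (hne : S.Nonempty)
    (w : Fin n → ℝ) : ∃ x ∈ S, lin w x = sSup (lin w '' S) := by
  have h := (hS.image (lin_cont w)).sSup_mem (hne.image _)
  obtain ⟨x, hx, hx'⟩ := h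
  exact ⟨x, hx, hx'⟩

lemma le_sSup_lin {S : Set (Fin n → ℝ)} (hS : IsCompact S) {x : Fin n → ℝ}
    (hx : x ∈ S) (w : Fin n → ℝ) : lin w x ≤ sSup (lin w '' S) :=
  le_csSup (hS.image (lin_cont w)).bddAbove ⟨x, hx, rfl⟩


lemma lift_one (K : Set (Fin n → ℝ)) (hK : IsCompact K) (hne : K.Nonempty)
    (c : Fin n → ℤ) (z : ℤ)
    (hz : sSup (lin (fun j => (c j : ℝ)) '' K) = (z : ℝ)) (a : Fin n → ℤ) :
    ∃ N : ℕ,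
      cgCut K (fun j => (a j : ℝ) + (N : ℝ) * (c j : ℝ)) ∩
          {x | lin (fun j => (c j : ℝ)) x = (z : ℝ)} =
        cgCut (K ∩ {x | lin (fun j => (c j : ℝ)) x = (z : ℝ)}) (fun j => (a j : ℝ)) := by
  set cr : Fin n → ℝ := fun j => (c j : ℝ) with hcr
  set ar : Fin n → ℝ := fun j => (a j : ℝ) with har
  set P : Set (Fin n → ℝ) := {x | lin cr x = (z : ℝ)} with hP
  have hPc : IsClosed P := isClosed_eq (lin_cont cr) continuous_const
  set F : Set (Fin n → ℝ) := K ∩ P with hF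
  have hFc : IsCompact F := hK.inter_right hPc
  -- F nonempty: sup attained
  obtain ⟨xm, hxmK, hxm⟩ := exists_max hK hne cr
  have hxmF : xm ∈ F := ⟨hxmK, by rw [hP]; simp only [Set.mem_setOf_eq]; rw [hxm, hz]⟩
  have hFne : F.Nonempty := ⟨xm, hxmF⟩
  set s : ℝ := sSup (lin ar '' F) with hs
  set δ : ℤ := ⌊s⌋ with hδ
  have hsδ : s < (δ : ℝ) + 1 := Int.lt_floor_add_one s
  have hδs : (δ : ℝ) ≤ s := Int.floor_le s
  -- bound lin cr on K
  have hcK : ∀ x ∈ K, lin cr x ≤ (z : ℝ) := fun x hx => hz ▸ le_sSup_lin hK hx cr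
  -- open cover
  set U : ℕ → Set (Fin n → ℝ) :=
    fun N => {x | lin ar x - ((δ : ℝ) + 1) - (N : ℝ) * ((z : ℝ) - lin cr x) < 0} with hU
  have hUopen : ∀ N, IsOpen (U N) := by
    intro N
    have : Continuous fun x => lin ar x - ((δ : ℝ) + 1) - (N : ℝ) * ((z : ℝ) - lin cr x) := by
      have := lin_cont (n := n) ar; have := lin_cont (n := n) cr; fun_prop
    exact isOpen_lt this continuous_const
  have hcover : K ⊆ ⋃ N, U N := by
    intro x hx
    rcases eq_or_lt_of_le (hcK x hx) with heq | hlt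
    · -- x ∈ F
      have hxF : x ∈ F := ⟨hx, heq⟩
      have : lin ar x ≤ s := le_sSup_lin hFc hxF ar
      refine Set.mem_iUnion.2 ⟨0, ?_⟩
      simp only [hU, Set.mem_setOf_eq, Nat.cast_zero, zero_mul]
      linarith
    · obtain ⟨N, hN⟩ := exists_nat_gt ((lin ar x - ((δ : ℝ) + 1)) / ((z : ℝ) - lin cr x))
      refine Set.mem_iUnion.2 ⟨N, ?_⟩
      have hpos : (0 : ℝ) < (z : ℝ) - lin cr x := by linarith
      have := (div_lt_iff₀ hpos).1 hN
      simp only [hU, Set.mem_setOf_eq]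
      linarith
  obtain ⟨t, ht⟩ := hK.elim_finite_subcover U hUopen hcover
  set N : ℕ := t.sup id with hN
  have hbound : ∀ x ∈ K, lin ar x + (N : ℝ) * lin cr x < (δ : ℝ) + 1 + (N : ℝ) * (z : ℝ) := by
    intro x hx
    obtain ⟨M, hMt, hM⟩ := Set.mem_iUnion₂.1 (ht hx)
    have hMN : M ≤ N := Finset.le_sup (f := id) hMt
    have hcx : (0 : ℝ) ≤ (z : ℝ) - lin cr x := by have := hcK x hx; linarith
    simp only [hU, Set.mem_setOf_eq] at hM
    have : (M : ℝ) * ((z : ℝ) - lin cr x) ≤ (N : ℝ) * ((z : ℝ) - lin cr x) :=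
      mul_le_mul_of_nonneg_right (by exact_mod_cast hMN) hcx
    nlinarith
  refine ⟨N, ?_⟩
  set w : Fin n → ℝ := fun j => ar j + (N : ℝ) * cr j with hw
  -- floor of lifted sup
  have hwx : ∀ x, lin w x = lin ar x + (N : ℝ) * lin cr x := lin_add ar cr (N : ℝ)
  obtain ⟨xM, hxMK, hxM⟩ := exists_max hK hne w
  obtain ⟨xs, hxsF, hxs⟩ := exists_max hFc hFne ar
  have hxsP : lin cr xs = (z : ℝ) := hxsF.2
  have hupper : sSup (lin w '' K) < (δ : ℝ) + 1 + (N : ℝ) * (z : ℝ) := by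
    rw [← hxM, hwx]; exact hbound xM hxMK
  have hlower : (δ : ℝ) + (N : ℝ) * (z : ℝ) ≤ sSup (lin w '' K) := by
    have h1 : lin w xs = s + (N : ℝ) * (z : ℝ) := by rw [hwx, hxs, hxsP]
    have := le_sSup_lin hK hxsF.1 w
    rw [h1] at this; linarith
  have hfloor : ⌊sSup (lin w '' K)⌋ = δ + N * z := by
    rw [Int.floor_eq_iff]
    constructor
    · push_cast; linarith
    · push_cast; linarith
  -- final set equality
  ext x
  simp only [cgCut_def, Set.mem_inter_iff, Set.mem_setOf_eq, hfloor]
  constructor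
  · rintro ⟨⟨hxK, hle⟩, hxP⟩
    refine ⟨⟨hxK, hxP⟩, ?_⟩
    rw [hwx, hxP] at hle
    push_cast at hle ⊢
    linarith
  · rintro ⟨⟨hxK, hxP⟩, hle⟩
    refine ⟨⟨hxK, ?_⟩, hxP⟩
    rw [hwx, hxP]
    push_cast at hle ⊢
    linarith

lemma main_ind (c : Fin n → ℤ) (z : ℤ) :
    ∀ (k : ℕ) (a : Fin k → Fin n → ℤ) (K : Set (Fin n → ℝ)), IsCompact K → K.Nonempty →
      sSup (lin (fun j => (c j : ℝ)) '' K) = (z : ℝ) →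
      ∃ ns : Fin k → ℕ,
        cgList K (List.ofFn fun i => fun j => ((a i j : ℝ) + (ns i : ℝ) * (c j : ℝ))) ∩
            {x | lin (fun j => (c j : ℝ)) x = (z : ℝ)} =
          cgList (K ∩ {x | lin (fun j => (c j : ℝ)) x = (z : ℝ)})
            (List.ofFn fun i => fun j => ((a i j : ℝ))) := by
  intro k
  induction k with
  | zero =>
    intro a K hK hne hz
    exact ⟨fun i => 0, by simp [cgList]⟩
  | succ k ih =>
    intro a K hK hne hz
    obtain ⟨N, hN⟩ := lift_one K hK hne c z hz (a 0)
    set P : Set (Fin n → ℝ) := {x | lin (fun j => (c j : ℝ)) x = (z : ℝ)} with hP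
    set K' : Set (Fin n → ℝ) := cgCut K (fun j => ((a 0 j : ℝ) + (N : ℝ) * (c j : ℝ))) with hK'
    have hK'c : IsCompact K' := cgCut_isCompact hK _
    by_cases hF' : (K' ∩ P).Nonempty
    · -- sup over K' is still z
      obtain ⟨x0, hx0K', hx0P⟩ := hF'
      have hz' : sSup (lin (fun j => (c j : ℝ)) '' K') = (z : ℝ) := by
        apply le_antisymm
        · apply csSup_le ((Set.nonempty_of_mem hx0K').image _)
          rintro r ⟨x, hx, rfl⟩
          have : x ∈ K := cgCut_subset _ _ hx
          exact hz ▸ le_sSup_lin hK this _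
        · have := le_sSup_lin hK'c hx0K' (fun j => (c j : ℝ))
          rw [hx0P] at this; exact this
      obtain ⟨ns', hns'⟩ := ih (fun i => a i.succ) K' hK'c ⟨x0, hx0K'⟩ hz'
      refine ⟨Fin.cons N ns', ?_⟩
      rw [List.ofFn_succ, List.ofFn_succ]
      simp only [Fin.cons_zero, Fin.cons_succ]
      show cgList K' _ ∩ P = cgList (cgCut (K ∩ P) _) _
      rw [hns', hN]
    · -- the face is empty after the first cut
      refine ⟨Fin.cons N (fun _ => 0), ?_⟩
      rw [List.ofFn_succ, List.ofFn_succ]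
      simp only [Fin.cons_zero, Fin.cons_succ]
      show cgList K' _ ∩ P = cgList (cgCut (K ∩ P) _) _
      have hempty : K' ∩ P = ∅ := Set.not_nonempty_iff_eq_empty.1 hF'
      rw [← hN, hempty, cgList_empty]
      apply Set.eq_empty_of_subset_empty
      rw [← hempty]
      exact Set.inter_subset_inter_left P (cgList_subset _ _)

end CGAux

/-- Lifting sequences of CG cuts (Lemma 4.1): there are nonnegative integers
`n_1,…,n_k` with `CG(K,(a_1+n_1 c,…,a_k+n_k c)) ∩ {c·x = h_K(c)} = CG(F,(a_1,…,a_k))`. -/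
theorem stmt6 (n k : ℕ) (K : Set (Fin n → ℝ)) (hne : K.Nonempty) (hK : IsCompact K)
    (c : Fin n → ℤ) (z : ℤ)
    (hz : sSup ((fun x => ∑ j, (c j : ℝ) * x j) '' K) = (z : ℝ))
    (a : Fin k → Fin n → ℤ) :
    ∃ ns : Fin k → ℕ,
      cgList K (List.ofFn fun i => fun j => ((a i j : ℝ) + (ns i : ℝ) * (c j : ℝ))) ∩
          {x | ∑ j, (c j : ℝ) * x j = (z : ℝ)} =
        cgList (K ∩ {x | ∑ j, (c j : ℝ) * x j = (z : ℝ)})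
          (List.ofFn fun i => fun j => ((a i j : ℝ))) := by
  exact CGAux.main_ind c z k a K hK hne hz
end

section
/- The polytope P_n = {x ∈ [0,1]ⁿ : for every S ⊆ [n], Σ_{i∈S} x_i + Σ_{i∉S} (1 − x_i) ≥ 1} contains no integer points, yet for every S ⊆ [n], the polytope obtained from P_n by removing the single constraint indexed by S contains the integer point 1_{S̄} (the 0/1 indicator vector of the complement of S). -/
/-- The polytope `P_n` from Theorem 1.6 contains no integer points, yet removing
any single defining constraint (indexed by `S ⊆ [n]`) makes the indicator vector
of the complement of `S` feasible ("integer criticality"). -/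
theorem stmt7 (n : ℕ) :
    (∀ x : Fin n → ℝ,
      ((∀ i, 0 ≤ x i ∧ x i ≤ 1) ∧
        ∀ S : Finset (Fin n), 1 ≤ (∑ i ∈ S, x i) + ∑ i ∈ Sᶜ, (1 - x i)) →
      ¬ ∀ i, ∃ z : ℤ, x i = (z : ℝ)) ∧
    ∀ S : Finset (Fin n),
      (∀ i, (0:ℝ) ≤ (if i ∈ S then (0:ℝ) else 1) ∧ (if i ∈ S then (0:ℝ) else 1) ≤ 1) ∧
      ∀ T : Finset (Fin n), T ≠ S →
        1 ≤ (∑ i ∈ T, (if i ∈ S then (0:ℝ) else 1)) +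
          ∑ i ∈ Tᶜ, (1 - (if i ∈ S then (0:ℝ) else 1)) := by
  constructor
  · rintro x ⟨hbox, hcon⟩ hint
    have h01 : ∀ i, x i = 0 ∨ x i = 1 := by
      intro i
      obtain ⟨z, hz⟩ := hint i
      obtain ⟨h0, h1⟩ := hbox i
      rw [hz] at h0 h1 ⊢
      have hz0 : (0:ℤ) ≤ z := by exact_mod_cast h0
      have hz1 : z ≤ 1 := by exact_mod_cast h1
      interval_cases z <;> simp
    set S := Finset.univ.filter (fun i => x i = 0) with hS
    have e1 : ∑ i ∈ S, x i = 0 := by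
      apply Finset.sum_eq_zero
      intro i hi
      simpa [hS] using (Finset.mem_filter.mp hi).2
    have e2 : ∑ i ∈ Sᶜ, (1 - x i) = 0 := by
      apply Finset.sum_eq_zero
      intro i hi
      have hne : ¬ x i = 0 := by simpa [hS] using hi
      rcases h01 i with h | h
      · exact absurd h hne
      · simp [h]
    have := hcon S
    rw [e1, e2] at this
    linarith
  · intro S
    refine ⟨fun i => by by_cases h : i ∈ S <;> simp [h], ?_⟩
    intro T hT
    have nn1 : (0:ℝ) ≤ ∑ i ∈ T, (if i ∈ S then (0:ℝ) else 1) :=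
      Finset.sum_nonneg fun j _ => by by_cases h : j ∈ S <;> simp [h]
    have nn2 : (0:ℝ) ≤ ∑ i ∈ Tᶜ, (1 - (if i ∈ S then (0:ℝ) else 1)) :=
      Finset.sum_nonneg fun j _ => by by_cases h : j ∈ S <;> simp [h]
    by_cases h : ∃ i ∈ T, i ∉ S
    · obtain ⟨i, hiT, hiS⟩ := h
      have h1 : (if i ∈ S then (0:ℝ) else 1) ≤ ∑ i ∈ T, (if i ∈ S then (0:ℝ) else 1) :=
        Finset.single_le_sum (f := fun j => if j ∈ S then (0:ℝ) else 1)
          (fun j _ => by by_cases h : j ∈ S <;> simp [h]) hiT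
      rw [if_neg hiS] at h1
      linarith
    · push_neg at h
      have hsub : T ⊆ S := h
      obtain ⟨i, hiS, hiT⟩ : ∃ i ∈ S, i ∉ T := by
        by_contra hc
        push_neg at hc
        exact hT (Finset.Subset.antisymm hsub hc)
      have hiTc : i ∈ Tᶜ := Finset.mem_compl.mpr hiT
      have h1 : (1 - (if i ∈ S then (0:ℝ) else 1)) ≤
          ∑ i ∈ Tᶜ, (1 - (if i ∈ S then (0:ℝ) else 1)) :=
        Finset.single_le_sum (f := fun j => 1 - (if j ∈ S then (0:ℝ) else 1))
          (fun j _ => by by_cases h : j ∈ S <;> simp [h]) hiTc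
      rw [if_pos hiS] at h1
      linarith
end

section
/- Let a ∈ ℝⁿ \ {0}, b ∈ ℝ, and R, N ∈ ℕ. Let a' ∈ ℤⁿ be a precision-N Diophantine approximation of a (i.e., a' = round(l·a/‖a‖_∞) for some integer 1 ≤ l ≤ Nⁿ with ‖l·a/‖a‖_∞ − a'‖_∞ < 1/N and ‖a'‖_∞ = l), and set α = ‖a‖_∞/‖a'‖_∞. Then for every b' ∈ ℝ: every x with ‖x‖₁ ≤ R and a'·x ≤ b' satisfies a·x ≤ α(b' + R/N); symmetrically, every x with ‖x‖₁ ≤ R and a'·x ≥ b' satisfies a·x ≥ α(b' − R/N). -/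
/-! With `M = ‖a‖_∞` and `α = M / l`, one has `a = α (a' + ε)` where `ε = l a / M - a'` satisfies
`‖ε‖_∞ < 1 / N`; Hölder's inequality then gives `|a·x - α a'·x| ≤ α ‖ε‖_∞ ‖x‖₁ ≤ α R / N`. -/

open Finset

section DiophantineApproximation

variable {ι : Type*} [Fintype ι]

theorem abs_sum_mul_le_mul_sum_abs {u v : ι → ℝ} {c : ℝ} (hu : ∀ i, |u i| ≤ c) :
    |∑ i, u i * v i| ≤ c * ∑ i, |v i| :=
  calc |∑ i, u i * v i| ≤ ∑ i, |u i| * |v i| := by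
        simpa only [abs_mul] using abs_sum_le_sum_abs (fun i => u i * v i) univ
    _ ≤ ∑ i, c * |v i| := by gcongr with i; exact hu i
    _ = c * ∑ i, |v i| := (mul_sum _ _ _).symm

theorem iSup_abs_div_mul_mul_div_iSup_abs (a : ι → ℝ) {l : ℝ} (hl : l ≠ 0) (j : ι) :
    (⨆ k, |a k|) / l * (l * (a j / ⨆ k, |a k|)) = a j := by
  have hle : |a j| ≤ ⨆ k, |a k| := le_ciSup (f := fun k => |a k|) (Set.finite_range _).bddAbove j
  -- when the sup is `0`, `a = 0` and the junk value `a j / 0 = 0` is harmless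
  rcases eq_or_ne (⨆ k, |a k|) 0 with hM | hM
  · rw [hM] at hle
    simp [abs_nonpos_iff.mp hle]
  · field_simp

variable {a a' c x : ι → ℝ} {α δ R : ℝ}

theorem abs_sum_mul_sub_le_of_approx (hα : 0 ≤ α) (hδ : 0 ≤ δ) (ha : ∀ i, a i = α * c i)
    (hc : ∀ i, |c i - a' i| ≤ δ) (hx : ∑ i, |x i| ≤ R) :
    |∑ i, a i * x i - α * ∑ i, a' i * x i| ≤ α * (δ * R) := by
  have hsplit : ∑ i, a i * x i - α * ∑ i, a' i * x i = α * ∑ i, (c i - a' i) * x i := by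
    simp only [ha, sub_mul, sum_sub_distrib, mul_sub, mul_sum, mul_assoc]
  rw [hsplit, abs_mul, abs_of_nonneg hα]
  gcongr
  exact (abs_sum_mul_le_mul_sum_abs hc).trans (by gcongr)

theorem sum_mul_le_of_approx {b' : ℝ} (hα : 0 ≤ α) (hδ : 0 ≤ δ) (ha : ∀ i, a i = α * c i)
    (hc : ∀ i, |c i - a' i| ≤ δ) (hx : ∑ i, |x i| ≤ R) (hb : ∑ i, a' i * x i ≤ b') :
    ∑ i, a i * x i ≤ α * (b' + δ * R) := by
  have := (abs_le.mp (abs_sum_mul_sub_le_of_approx hα hδ ha hc hx)).2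
  nlinarith

theorem le_sum_mul_of_approx {b' : ℝ} (hα : 0 ≤ α) (hδ : 0 ≤ δ) (ha : ∀ i, a i = α * c i)
    (hc : ∀ i, |c i - a' i| ≤ δ) (hx : ∑ i, |x i| ≤ R) (hb : b' ≤ ∑ i, a' i * x i) :
    α * (b' - δ * R) ≤ ∑ i, a i * x i := by
  have := (abs_le.mp (abs_sum_mul_sub_le_of_approx hα hδ ha hc hx)).1
  nlinarith

end DiophantineApproximation

theorem stmt10_general (n R N : ℕ) (a : Fin n → ℝ)
    (a' : Fin n → ℤ) (l : ℕ) (hl1 : 1 ≤ l)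
    (happrox : (⨆ j, |(l : ℝ) * (a j / (⨆ k, |a k|)) - (a' j : ℝ)|) < 1 / N)
    (hnorm : (⨆ j, |(a' j : ℝ)|) = (l : ℝ)) (b' : ℝ) :
    (∀ x : Fin n → ℝ, (∑ i, |x i|) ≤ (R : ℝ) →
      (∑ i, (a' i : ℝ) * x i) ≤ b' →
      (∑ i, a i * x i) ≤
        ((⨆ j, |a j|) / (⨆ j, |(a' j : ℝ)|)) * (b' + (R : ℝ) / N)) ∧
    (∀ x : Fin n → ℝ, (∑ i, |x i|) ≤ (R : ℝ) →
      b' ≤ ∑ i, (a' i : ℝ) * x i →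
      ((⨆ j, |a j|) / (⨆ j, |(a' j : ℝ)|)) * (b' - (R : ℝ) / N) ≤
        ∑ i, a i * x i) := by
  have hl : (l : ℝ) ≠ 0 := by positivity
  have hα : 0 ≤ (⨆ j, |a j|) / l := div_nonneg (Real.iSup_nonneg fun _ => abs_nonneg _) l.cast_nonneg
  have ha j := (iSup_abs_div_mul_mul_div_iSup_abs a hl j).symm
  have hc j : |(l : ℝ) * (a j / ⨆ k, |a k|) - a' j| ≤ 1 / N :=
    ((le_ciSup (Set.finite_range _).bddAbove j).trans_lt happrox).le
  have hδ : (0 : ℝ) ≤ 1 / N := by positivity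
  rw [hnorm, ← one_div_mul_eq_div (N : ℝ) R]
  exact ⟨fun x hx hb => sum_mul_le_of_approx hα hδ ha hc hx hb,
    fun x hx hb => le_sum_mul_of_approx hα hδ ha hc hx hb⟩

/-- Lemma 3.1 part (i): if `a'` is a precision-`N` Diophantine approximation of
`a` and `α = ‖a‖_∞/‖a'‖_∞`, then for every `b'`, on the ball `‖x‖₁ ≤ R`,
`a'·x ≤ b'` implies `a·x ≤ α(b' + R/N)` and `a'·x ≥ b'` implies
`a·x ≥ α(b' − R/N)`. -/
theorem stmt10 (n R N : ℕ) (a : Fin n → ℝ) (ha : a ≠ 0)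
    (a' : Fin n → ℤ) (l : ℕ) (hl1 : 1 ≤ l) (hl2 : l ≤ N ^ n)
    (happrox : (⨆ j, |(l : ℝ) * (a j / (⨆ k, |a k|)) - (a' j : ℝ)|) < 1 / N)
    (hnorm : (⨆ j, |(a' j : ℝ)|) = (l : ℝ)) (b' : ℝ) :
    (∀ x : Fin n → ℝ, (∑ i, |x i|) ≤ (R : ℝ) →
      (∑ i, (a' i : ℝ) * x i) ≤ b' →
      (∑ i, a i * x i) ≤
        ((⨆ j, |a j|) / (⨆ j, |(a' j : ℝ)|)) * (b' + (R : ℝ) / N)) ∧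
    (∀ x : Fin n → ℝ, (∑ i, |x i|) ≤ (R : ℝ) →
      b' ≤ ∑ i, (a' i : ℝ) * x i →
      ((⨆ j, |a j|) / (⨆ j, |(a' j : ℝ)|)) * (b' - (R : ℝ) / N) ≤
        ∑ i, a i * x i) :=
  stmt10_general n R N a a' l hl1 happrox hnorm b'
end

section
/- Let K ⊆ ℝⁿ be a compact convex set with K ∩ ℤⁿ = ∅ that admits an enumerative branching proof T. Then there exists a finite list L = (a_1, …, a_N) of vectors in ℤⁿ with N ≤ 2|T| − 1 such that CG(K, L) = ∅. -/
/-- An enumerative branching proof: each node branches on an integer direction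
`a` and enumerates all integers `b` in an interval `[l, u]` containing
`{a·x : x ∈ K_v}`, with a child for each such `b` (equality branch `a·x = b`). -/
inductive ETree (n : ℕ) : Type where
  | leaf : ETree n
  | node : (Fin n → ℤ) → ℝ → ℝ → (ℤ → ETree n) → ETree n

/-- Number of nodes of an enumerative branching proof (children outside the
interval `[l, u]` do not count). -/
noncomputable def ETree.size {n : ℕ} : ETree n → ℕ
  | .leaf => 1
  | .node _ l u c => 1 + ∑ b ∈ Finset.Icc ⌈l⌉ ⌊u⌋, (c b).size

/-- Validity of an enumerative branching proof for `K`: at a node, the bounds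
must contain `{a·x : x ∈ K}` and each integer child relaxation must be valid;
a leaf has empty relaxation (a node with no integer `b ∈ [l,u]` handles the
"integer-free interval" leaf case). -/
def EValid {n : ℕ} (K : Set (Fin n → ℝ)) : ETree n → Prop
  | .leaf => K = ∅
  | .node a l u c =>
      (∀ x ∈ K, l ≤ (∑ j, (a j : ℝ) * x j) ∧ (∑ j, (a j : ℝ) * x j) ≤ u) ∧
      ∀ b : ℤ, l ≤ (b : ℝ) → (b : ℝ) ≤ u →
        EValid (K ∩ {x | ∑ j, (a j : ℝ) * x j = (b : ℝ)}) (c b)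

/-!
Induct on the branching tree. At a node branching on `a`, one cut with `a` gives `a·x ≤ ⌊u⌋`;
then the hyperplane `a·x = b` is pushed down one integer at a time. The child's refutation of
the slice `K ∩ {a·x = b}` lifts to cuts on the current set (CG lifting: add a large multiple of
`a` to each cut, which changes nothing on the hyperplane and, by compactness, makes the cut
inactive away from it). Once the slice is empty the maximum of `a·x` is below `b`, so one more
cut with `a` gives `a·x ≤ b - 1`. A child refuted with `N < 2|T_child|` cuts thus costs
`N + 1 ≤ 2|T_child|` cuts, and the node itself one, whence the bound `2|T| - 1`.
-/

open Finset

variable {n : ℕ} {S T : Set (Fin n → ℝ)}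

lemma cgCut_subset (w : Fin n → ℝ) : cgCut S w ⊆ S := Set.inter_subset_left

lemma continuous_dotProduct_left (w : Fin n → ℝ) : Continuous (w ⬝ᵥ ·) := by
  fun_prop

lemma IsCompact.inter_dotProduct_eq (hS : IsCompact S) (a : Fin n → ℝ) (b : ℝ) :
    IsCompact (S ∩ {x | a ⬝ᵥ x = b}) :=
  hS.inter_right (isClosed_eq (continuous_dotProduct_left a) continuous_const)

lemma isCompact_cgCut (hS : IsCompact S) (w : Fin n → ℝ) : IsCompact (cgCut S w) :=
  hS.inter_right (isClosed_le (continuous_dotProduct_left w) continuous_const)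

lemma cgCut_mono (hST : S ⊆ T) (hT : IsCompact T) (w : Fin n → ℝ) :
    cgCut S w ⊆ cgCut T w := by
  rintro x ⟨hxS, hx : w ⬝ᵥ x ≤ _⟩
  refine ⟨hST hxS, hx.trans ?_⟩
  exact_mod_cast Int.floor_le_floor <|
    csSup_le_csSup (hT.bddAbove_image (continuous_dotProduct_left w).continuousOn)
      (Set.Nonempty.image _ ⟨x, hxS⟩) (Set.image_mono hST)

lemma cgCut_subset_of_lt_add_one (hS : IsCompact S) {w : Fin n → ℝ} {m : ℤ}
    (h : ∀ x ∈ S, w ⬝ᵥ x < m + 1) : cgCut S w ⊆ {x | w ⬝ᵥ x ≤ m} := by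
  rintro x ⟨hxS, hx : w ⬝ᵥ x ≤ _⟩
  have hsup : sSup ((w ⬝ᵥ ·) '' S) < (m + 1 : ℤ) := by
    rw [hS.sSup_lt_iff_of_continuous ⟨x, hxS⟩ (continuous_dotProduct_left w).continuousOn]
    exact_mod_cast h
  exact hx.trans (by exact_mod_cast Int.le_of_lt_add_one (Int.floor_lt.2 hsup))

@[simp]
lemma cgList_nil (S : Set (Fin n → ℝ)) : cgList S [] = S := rfl

@[simp]
lemma cgList_cons (S : Set (Fin n → ℝ)) (w : Fin n → ℝ) (L : List (Fin n → ℝ)) :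
    cgList S (w :: L) = cgList (cgCut S w) L := rfl

@[simp]
lemma cgList_append (S : Set (Fin n → ℝ)) (L₁ L₂ : List (Fin n → ℝ)) :
    cgList S (L₁ ++ L₂) = cgList (cgList S L₁) L₂ :=
  List.foldl_append

lemma cgList_subset (L : List (Fin n → ℝ)) : cgList S L ⊆ S := by
  induction L generalizing S with
  | nil => exact subset_rfl
  | cons w L ih => exact ih.trans (cgCut_subset w)

lemma isCompact_cgList (hS : IsCompact S) (L : List (Fin n → ℝ)) : IsCompact (cgList S L) := by
  induction L generalizing S with
  | nil => exact hS
  | cons w L ih => exact ih (isCompact_cgCut hS w)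

lemma cgList_mono (hST : S ⊆ T) (hT : IsCompact T) (L : List (Fin n → ℝ)) :
    cgList S L ⊆ cgList T L := by
  induction L generalizing S T with
  | nil => exact hST
  | cons w L ih => exact ih (cgCut_mono hST hT w) (isCompact_cgCut hT w)

lemma IsCompact.exists_pos_lt_of_lt_on_eq {X : Type*} [TopologicalSpace X] {K : Set X}
    (hK : IsCompact K) {f g : X → ℝ} (hf : Continuous f) (hg : Continuous g) {b c : ℝ}
    (hfb : ∀ x ∈ K, f x ≤ b) (hgc : ∀ x ∈ K, f x = b → g x < c) :
    ∃ δ > 0, ∀ x ∈ K, b - δ < f x → g x < c := by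
  set C := K ∩ {x | c ≤ g x}
  obtain hC | hC := C.eq_empty_or_nonempty
  · refine ⟨1, one_pos, fun x hx _ => not_le.1 fun hcx => ?_⟩
    exact (Set.eq_empty_iff_forall_notMem.1 hC) x ⟨hx, hcx⟩
  obtain ⟨x₀, ⟨hx₀K, hx₀c⟩, hmax⟩ :=
    (hK.inter_right (isClosed_le continuous_const hg)).exists_isMaxOn hC hf.continuousOn
  have hx₀b : f x₀ < b :=
    (hfb x₀ hx₀K).lt_of_ne fun h => (hgc x₀ hx₀K h).not_ge hx₀c
  refine ⟨b - f x₀, sub_pos.2 hx₀b, fun x hx hfx => not_le.1 fun hcx => ?_⟩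
  have : f x ≤ f x₀ := hmax ⟨hx, hcx⟩
  linarith

lemma exists_nat_add_smul_dotProduct_lt (hS : IsCompact S) {a w : Fin n → ℝ} {b c : ℝ}
    (hSb : ∀ x ∈ S, a ⬝ᵥ x ≤ b) (hface : ∀ x ∈ S, a ⬝ᵥ x = b → w ⬝ᵥ x < c) :
    ∃ M : ℕ, ∀ x ∈ S, (w + (M : ℝ) • a) ⬝ᵥ x < c + M * b := by
  obtain ⟨δ, hδ, hnear⟩ := hS.exists_pos_lt_of_lt_on_eq (continuous_dotProduct_left a)
    (continuous_dotProduct_left w) hSb hface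
  obtain ⟨B, hB⟩ := hS.bddAbove_image (continuous_dotProduct_left w).continuousOn
  obtain ⟨M, hM⟩ := exists_nat_gt ((B - c) / δ)
  refine ⟨M, fun x hx => ?_⟩
  have hM₀ : (0 : ℝ) ≤ M := M.cast_nonneg
  have hwB : w ⬝ᵥ x ≤ B := hB ⟨x, hx, rfl⟩
  have hMδ : B - c < M * δ := (div_lt_iff₀ hδ).1 hM
  rw [add_dotProduct, smul_dotProduct, smul_eq_mul]
  -- far from the face, `M * (a·x - b) ≤ -M * δ` absorbs the gap `w·x - c ≤ B - c`
  obtain hfar | hnear' := le_or_gt (a ⬝ᵥ x) (b - δ)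
  · nlinarith
  · nlinarith [hnear x hx hnear', hSb x hx]

lemma exists_cgCut_lift (hS : IsCompact S) {a : Fin n → ℝ} {b : ℤ}
    (hSb : ∀ x ∈ S, a ⬝ᵥ x ≤ b) (w : Fin n → ℝ) :
    ∃ M : ℕ, cgCut S (w + (M : ℝ) • a) ∩ {x | a ⬝ᵥ x = b} ⊆
      cgCut (S ∩ {x | a ⬝ᵥ x = b}) w := by
  set F := S ∩ {x | a ⬝ᵥ x = b}
  set m := ⌊sSup ((w ⬝ᵥ ·) '' F)⌋
  have hF : IsCompact F := hS.inter_dotProduct_eq a b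
  have hface : ∀ x ∈ S, a ⬝ᵥ x = b → w ⬝ᵥ x < m + 1 := fun x hx hxb =>
    (le_csSup (hF.bddAbove_image (continuous_dotProduct_left w).continuousOn)
      ⟨x, ⟨hx, hxb⟩, rfl⟩).trans_lt (Int.lt_floor_add_one _)
  obtain ⟨M, hM⟩ := exists_nat_add_smul_dotProduct_lt hS hSb hface
  refine ⟨M, fun x ⟨hxcut, hxb⟩ => ⟨⟨cgCut_subset _ hxcut, hxb⟩, ?_⟩⟩
  have hcut := cgCut_subset_of_lt_add_one (m := m + M * b) hS
    (fun y hy => by push_cast; linarith [hM y hy]) hxcut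
  simp only [Set.mem_ofPred_eq, add_dotProduct, smul_dotProduct, smul_eq_mul] at hcut hxb
  rw [hxb] at hcut
  show w ⬝ᵥ x ≤ (m : ℝ)
  push_cast at hcut
  linarith

lemma exists_cgList_lift (hS : IsCompact S) (a : Fin n → ℤ) {b : ℤ}
    (hSb : ∀ x ∈ S, (Int.cast ∘ a) ⬝ᵥ x ≤ b) (L : List (Fin n → ℤ)) :
    ∃ L' : List (Fin n → ℤ), L'.length = L.length ∧
      cgList S (L'.map (Int.cast ∘ ·)) ∩ {x | (Int.cast ∘ a) ⬝ᵥ x = b} ⊆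
        cgList (S ∩ {x | (Int.cast ∘ a) ⬝ᵥ x = b}) (L.map (Int.cast ∘ ·)) := by
  induction L generalizing S with
  | nil => exact ⟨[], rfl, subset_rfl⟩
  | cons w L ih =>
    obtain ⟨M, hM⟩ := exists_cgCut_lift hS hSb (Int.cast ∘ w)
    have hcast : (Int.cast ∘ (w + (M : ℤ) • a) : Fin n → ℝ) =
        Int.cast ∘ w + (M : ℝ) • Int.cast ∘ a := by
      ext j
      simp
    obtain ⟨L', hlen, hL'⟩ := ih (isCompact_cgCut hS _) fun x hx => hSb x (cgCut_subset _ hx)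
    refine ⟨(w + (M : ℤ) • a) :: L', by simp [hlen], ?_⟩
    simp only [List.map_cons, cgList_cons, hcast]
    exact hL'.trans (cgList_mono hM (isCompact_cgCut (hS.inter_dotProduct_eq _ _) _) _)

lemma exists_cgList_subset_le_sub_one (hS : IsCompact S) (a : Fin n → ℤ) {b : ℤ}
    (hSb : ∀ x ∈ S, (Int.cast ∘ a) ⬝ᵥ x ≤ b) {L : List (Fin n → ℤ)}
    (hL : cgList (S ∩ {x | (Int.cast ∘ a) ⬝ᵥ x = b}) (L.map (Int.cast ∘ ·)) = ∅) :
    ∃ L' : List (Fin n → ℤ), L'.length = L.length + 1 ∧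
      cgList S (L'.map (Int.cast ∘ ·)) ⊆
        {x | (Int.cast ∘ a) ⬝ᵥ x ≤ ((b - 1 : ℤ) : ℝ)} := by
  obtain ⟨L₁, hlen, hL₁⟩ := exists_cgList_lift hS a hSb L
  have hlt : ∀ x ∈ cgList S (L₁.map (Int.cast ∘ ·)),
      (Int.cast ∘ a) ⬝ᵥ x < ((b - 1 : ℤ) : ℝ) + 1 := fun x hx => by
    push_cast
    refine lt_of_le_of_ne (by linarith [hSb x (cgList_subset _ hx)]) fun hxb => ?_
    exact (hL ▸ hL₁) ⟨hx, by simp only [Set.mem_ofPred_eq]; linarith⟩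
  refine ⟨L₁ ++ [a], by simp [hlen], ?_⟩
  simpa using cgCut_subset_of_lt_add_one (isCompact_cgList hS _) hlt

lemma exists_cgList_eq_empty_of_slices {K : Set (Fin n → ℝ)} (hK : IsCompact K)
    (a : Fin n → ℤ) {l : ℝ} (hl : ∀ x ∈ K, l ≤ (Int.cast ∘ a) ⬝ᵥ x)
    (len : ℤ → ℕ) (b : ℤ)
    (hslices : ∀ t ∈ Icc ⌈l⌉ b, ∃ L : List (Fin n → ℤ), L.length < 2 * len t ∧
      cgList (K ∩ {x | (Int.cast ∘ a) ⬝ᵥ x = t}) (L.map (Int.cast ∘ ·)) = ∅)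
    (hS : IsCompact S) (hSK : S ⊆ K) (hSb : ∀ x ∈ S, (Int.cast ∘ a) ⬝ᵥ x ≤ b) :
    ∃ L : List (Fin n → ℤ), L.length ≤ 2 * ∑ t ∈ Icc ⌈l⌉ b, len t ∧
      cgList S (L.map (Int.cast ∘ ·)) = ∅ := by
  have hbelow :
      ∀ b < ⌈l⌉, ∀ S ⊆ K, (∀ x ∈ S, (Int.cast ∘ a) ⬝ᵥ x ≤ b) → S = ∅ :=
    fun b hb S hSK hSb => Set.eq_empty_of_forall_notMem fun x hx => by
      have hbl : (b : ℝ) < l := by exact_mod_cast Int.lt_ceil.1 hb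
      linarith [hl x (hSK hx), hSb x hx]
  induction b using Int.inductionOn' (b := ⌈l⌉ - 1) generalizing S with
  | zero => exact ⟨[], Nat.zero_le _, hbelow _ (by omega) S hSK hSb⟩
  | pred k hk _ => exact ⟨[], Nat.zero_le _, hbelow _ (by omega) S hSK hSb⟩
  | succ k hk ih =>
    obtain ⟨L, hlen, hL⟩ := hslices (k + 1) (mem_Icc.2 ⟨by omega, le_rfl⟩)
    obtain ⟨L₁, hlen₁, hL₁⟩ := exists_cgList_subset_le_sub_one hS a hSb <|
      Set.subset_empty_iff.1 <|
        hL ▸ cgList_mono (Set.inter_subset_inter_left _ hSK) (hK.inter_dotProduct_eq _ _) _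
    rw [add_sub_cancel_right] at hL₁
    obtain ⟨L₂, hlen₂, hL₂⟩ :=
      ih (fun t ht => hslices t (Icc_subset_Icc_right (by omega) ht))
      (isCompact_cgList hS _) ((cgList_subset _).trans hSK) hL₁
    refine ⟨L₁ ++ L₂, ?_, by simpa using hL₂⟩
    rw [← insert_Icc_right_eq_Icc_add_one (by omega), sum_insert (by simp)]
    simp only [List.length_append]
    omega

theorem exists_cgList_eq_empty_of_eValid (T : ETree n) {K : Set (Fin n → ℝ)}
    (hK : IsCompact K) (hT : EValid K T) :
    ∃ L : List (Fin n → ℤ), L.length < 2 * T.size ∧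
      cgList K (L.map (Int.cast ∘ ·)) = ∅ := by
  induction T generalizing K with
  | leaf => exact ⟨[], by simp [ETree.size], hT⟩
  | node a l u c ih =>
    obtain ⟨hbounds, hchildren⟩ := hT
    have hcut : cgCut K (Int.cast ∘ a) ⊆ {x | (Int.cast ∘ a) ⬝ᵥ x ≤ (⌊u⌋ : ℤ)} :=
      cgCut_subset_of_lt_add_one hK fun x hx =>
        (hbounds x hx).2.trans_lt (Int.lt_floor_add_one u)
    have hslices (t : ℤ) (ht : t ∈ Icc ⌈l⌉ ⌊u⌋) := ih t (hK.inter_dotProduct_eq _ _)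
      (hchildren t (Int.ceil_le.1 (mem_Icc.1 ht).1) (Int.le_floor.1 (mem_Icc.1 ht).2))
    obtain ⟨L, hlen, hL⟩ := exists_cgList_eq_empty_of_slices hK a (fun x hx => (hbounds x hx).1)
      (fun t => (c t).size) ⌊u⌋ hslices (isCompact_cgCut hK _) (cgCut_subset _) hcut
    refine ⟨a :: L, ?_, hL⟩
    simp only [List.length_cons, ETree.size]
    omega

theorem stmt15_general (n : ℕ) (K : Set (Fin n → ℝ)) (hK : IsCompact K)
    (T : ETree n) (hT : EValid K T) :
    ∃ L : List (Fin n → ℤ), L.length ≤ 2 * T.size - 1 ∧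
      cgList K (L.map fun w => fun j => ((w j : ℝ))) = ∅ := by
  obtain ⟨L, hlen, hL⟩ := exists_cgList_eq_empty_of_eValid T hK hT
  exact ⟨L, by omega, hL⟩

/-- Theorem 1.4: an enumerative branching proof `T` for a compact convex
integer-free `K` can be serialized into a CP refutation of length at most
`2|T| − 1`. -/
theorem stmt15 (n : ℕ) (K : Set (Fin n → ℝ)) (hK : IsCompact K)
    (hconv : Convex ℝ K)
    (hfree : ∀ x ∈ K, ¬ ∀ i, ∃ z : ℤ, x i = (z : ℝ))
    (T : ETree n) (hT : EValid K T) :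
    ∃ L : List (Fin n → ℤ), L.length ≤ 2 * T.size - 1 ∧
      cgList K (L.map fun w => fun j => ((w j : ℝ))) = ∅ :=
  stmt15_general n K hK T hT
end

section
/- Let K ⊆ ℝⁿ be a nonempty compact convex set, a ∈ ℤⁿ, and suppose h_K(a) ∈ ℤ (so the face F = F_K(a) is nonempty). If L is a list of integer vectors with CG(F, L) = ∅, then h_{CG(K, L')}(a) < h_K(a) for the lifted list L' obtained from L via the sequential lifting lemma; consequently, applying one more CG cut induced by a to CG(K, L') yields a set on which the maximum of a·x is at most h_K(a) − 1. -/
theorem IsCompact.exists_nat_penalty_lt {X : Type*} [TopologicalSpace X] {K : Set X}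
    (hK : IsCompact K) {f g : X → ℝ} (hf : Continuous f) (hg : Continuous g)
    (hg_nonpos : ∀ x ∈ K, g x ≤ 0) {c : ℝ} (hfc : ∀ x ∈ K, g x = 0 → f x < c) :
    ∃ N : ℕ, ∀ x ∈ K, f x + N * g x < c := by
  set T := K ∩ {x | c ≤ f x}
  have hT : IsCompact T := hK.inter_right (isClosed_le continuous_const hf)
  rcases T.eq_empty_or_nonempty with hT_empty | hT_ne
  · refine ⟨0, fun x hx => ?_⟩
    have hfx : f x < c := not_le.mp fun h => hT_empty.subset ⟨hx, h⟩
    simpa using hfx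
  obtain ⟨x₀, ⟨hx₀K, hx₀c⟩, hx₀max⟩ := hT.exists_isMaxOn hT_ne hg.continuousOn
  have hgx₀ : g x₀ < 0 :=
    (hg_nonpos x₀ hx₀K).lt_of_ne fun h => (hfc x₀ hx₀K h).not_ge hx₀c
  obtain ⟨C, hC⟩ := hK.bddAbove_image hf.continuousOn
  obtain ⟨N, hN⟩ := exists_nat_gt ((C - c) / -g x₀)
  have hNg : C - c < N * -g x₀ := (div_lt_iff₀ (neg_pos.mpr hgx₀)).mp hN
  refine ⟨N, fun x hx => ?_⟩
  have hN0 : (0 : ℝ) ≤ N := N.cast_nonneg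
  by_cases hfx : c ≤ f x
  · have hgx : g x ≤ g x₀ := hx₀max ⟨hx, hfx⟩
    have hCx : f x ≤ C := hC ⟨x, hx, rfl⟩
    nlinarith
  · nlinarith [hg_nonpos x hx]

namespace CG

variable {n : ℕ}

theorem continuous_dotProduct (w : Fin n → ℝ) : Continuous (w ⬝ᵥ ·) :=
  continuous_const.dotProduct continuous_id

theorem mem_cgCut {S : Set (Fin n → ℝ)} {w x : Fin n → ℝ} :
    x ∈ cgCut S w ↔ x ∈ S ∧ w ⬝ᵥ x ≤ ⌊sSup ((w ⬝ᵥ ·) '' S)⌋ :=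
  Iff.rfl

theorem cgCut_subset (S : Set (Fin n → ℝ)) (w : Fin n → ℝ) : cgCut S w ⊆ S :=
  Set.inter_subset_left

theorem cgList_cons (S : Set (Fin n → ℝ)) (w : Fin n → ℝ) (L : List (Fin n → ℝ)) :
    cgList S (w :: L) = cgList (cgCut S w) L :=
  rfl

theorem cgList_subset (S : Set (Fin n → ℝ)) (L : List (Fin n → ℝ)) : cgList S L ⊆ S := by
  induction L generalizing S with
  | nil => exact subset_rfl
  | cons w L ih => exact (ih _).trans (cgCut_subset S w)

theorem _root_.IsCompact.cgCut {S : Set (Fin n → ℝ)} (hS : IsCompact S) (w : Fin n → ℝ) :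
    IsCompact (cgCut S w) :=
  hS.inter_right (isClosed_le (continuous_dotProduct w) continuous_const)

theorem _root_.IsCompact.cgList {S : Set (Fin n → ℝ)} (hS : IsCompact S)
    (L : List (Fin n → ℝ)) : IsCompact (cgList S L) := by
  induction L generalizing S with
  | nil => exact hS
  | cons w L ih => exact ih (hS.cgCut w)

theorem _root_.IsCompact.inter_dotProduct_eq_s16 {K : Set (Fin n → ℝ)} (hK : IsCompact K)
    (a : Fin n → ℝ) (c : ℝ) : IsCompact (K ∩ {x | a ⬝ᵥ x = c}) :=
  hK.inter_right (isClosed_eq (continuous_dotProduct a) continuous_const)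

theorem cgCut_mono {S S' : Set (Fin n → ℝ)} (hS : IsCompact S) (h : S' ⊆ S)
    (w : Fin n → ℝ) : cgCut S' w ⊆ cgCut S w := by
  intro x hx
  rw [mem_cgCut] at hx ⊢
  have hsup : sSup ((w ⬝ᵥ ·) '' S') ≤ sSup ((w ⬝ᵥ ·) '' S) :=
    csSup_le_csSup (hS.bddAbove_image (continuous_dotProduct w).continuousOn)
      ⟨_, x, hx.1, rfl⟩ (Set.image_mono h)
  exact ⟨h hx.1, hx.2.trans (mod_cast Int.floor_le_floor hsup)⟩

theorem cgList_mono {S S' : Set (Fin n → ℝ)} (hS : IsCompact S) (h : S' ⊆ S)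
    (L : List (Fin n → ℝ)) : cgList S' L ⊆ cgList S L := by
  induction L generalizing S S' with
  | nil => exact h
  | cons w L ih => exact ih (hS.cgCut w) (cgCut_mono hS h w)

theorem exists_cgCut_lift_inter_face_subset {K : Set (Fin n → ℝ)} (hK : IsCompact K)
    (a w : Fin n → ℝ) {z : ℤ} (hub : ∀ x ∈ K, a ⬝ᵥ x ≤ z) :
    ∃ N : ℕ, cgCut K (w + (N : ℝ) • a) ∩ {x | a ⬝ᵥ x = z} ⊆
      cgCut (K ∩ {x | a ⬝ᵥ x = z}) w := by
  set F := K ∩ {x | a ⬝ᵥ x = z}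
  rcases F.eq_empty_or_nonempty with hF | hF
  · exact ⟨0, fun x hx => (Set.notMem_empty x (hF.subset ⟨cgCut_subset _ _ hx.1, hx.2⟩)).elim⟩
  set M := ⌊sSup ((w ⬝ᵥ ·) '' F)⌋
  have hface : ∀ x ∈ K, a ⬝ᵥ x - z = 0 → w ⬝ᵥ x < M + 1 := fun x hx hax =>
    (le_csSup ((hK.inter_dotProduct_eq_s16 a z).bddAbove_image (continuous_dotProduct w).continuousOn)
      ⟨x, ⟨hx, sub_eq_zero.mp hax⟩, rfl⟩).trans_lt (Int.lt_floor_add_one _)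
  obtain ⟨N, hN⟩ := hK.exists_nat_penalty_lt (g := fun x => a ⬝ᵥ x - z) (continuous_dotProduct w)
    ((continuous_dotProduct a).sub continuous_const) (fun x hx => sub_nonpos.mpr (hub x hx)) hface
  have hlift : ∀ x, (w + (N : ℝ) • a) ⬝ᵥ x = w ⬝ᵥ x + N * (a ⬝ᵥ x - z) + N * z := fun x => by
    rw [add_dotProduct, smul_dotProduct, smul_eq_mul]
    ring
  have hsup : sSup (((w + (N : ℝ) • a) ⬝ᵥ ·) '' K) < ((M + N * z + 1 : ℤ) : ℝ) := by
    rw [hK.sSup_lt_iff_of_continuous ⟨_, hF.some_mem.1⟩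
      (continuous_dotProduct _).continuousOn]
    intro x hx
    push_cast
    linarith [hN x hx, hlift x]
  have hfloor : (⌊sSup (((w + (N : ℝ) • a) ⬝ᵥ ·) '' K)⌋ : ℝ) ≤ M + N * z := by
    exact_mod_cast Int.lt_add_one_iff.mp (Int.floor_lt.mpr hsup)
  refine ⟨N, fun x ⟨hx, hax⟩ => ?_⟩
  rw [mem_cgCut] at hx ⊢
  have hax : a ⬝ᵥ x = z := hax
  have hwx := hlift x
  rw [hax, sub_self, mul_zero, add_zero] at hwx
  refine ⟨⟨hx.1, hax⟩, show w ⬝ᵥ x ≤ (M : ℝ) from ?_⟩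
  linarith [hx.2]

/-- The sequential lifting lemma. -/
theorem exists_lift_cgList_inter_face_eq_empty {ι : Type*} (v : ι → Fin n → ℝ)
    (a : Fin n → ℝ) (z : ℤ) (L : List ι) {K : Set (Fin n → ℝ)} (hK : IsCompact K)
    (hub : ∀ x ∈ K, a ⬝ᵥ x ≤ z) (hL : cgList (K ∩ {x | a ⬝ᵥ x = z}) (L.map v) = ∅) :
    ∃ ns : Fin L.length → ℕ,
      cgList K (List.ofFn fun i => v (L.get i) + (ns i : ℝ) • a) ∩ {x | a ⬝ᵥ x = z} = ∅ := by
  induction L generalizing K with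
  | nil => exact ⟨Fin.elim0, hL⟩
  | cons w L ih =>
    obtain ⟨N, hN⟩ := exists_cgCut_lift_inter_face_subset hK a (v w) hub
    set K₁ := cgCut K (v w + (N : ℝ) • a)
    have hL₁ : cgList (K₁ ∩ {x | a ⬝ᵥ x = z}) (L.map v) = ∅ :=
      Set.subset_eq_empty (cgList_mono ((hK.inter_dotProduct_eq_s16 a z).cgCut _) hN _) hL
    obtain ⟨ns, hns⟩ := ih (hK.cgCut _) (fun x hx => hub x (cgCut_subset _ _ hx)) hL₁
    refine ⟨Fin.cons N ns, ?_⟩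
    rw [List.ofFn_succ]
    exact hns

theorem dotProduct_le_sub_one_of_mem_cgCut {S : Set (Fin n → ℝ)} (hS : IsCompact S)
    {a : Fin n → ℝ} {z : ℤ} (hlt : ∀ x ∈ S, a ⬝ᵥ x < z) {x : Fin n → ℝ}
    (hx : x ∈ cgCut S a) : a ⬝ᵥ x ≤ z - 1 := by
  rw [mem_cgCut] at hx
  have hsup : sSup ((a ⬝ᵥ ·) '' S) < z :=
    (hS.sSup_lt_iff_of_continuous ⟨x, hx.1⟩ (continuous_dotProduct a).continuousOn z).mpr hlt
  have hfloor : ⌊sSup ((a ⬝ᵥ ·) '' S)⌋ ≤ z - 1 := Int.le_sub_one_of_lt (Int.floor_lt.mpr hsup)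
  exact hx.2.trans (mod_cast hfloor)

end CG

open CG in
theorem stmt16_general (n : ℕ) (K : Set (Fin n → ℝ))
    (hK : IsCompact K) (a : Fin n → ℤ) (z : ℤ)
    (hz : sSup ((fun x => ∑ j, (a j : ℝ) * x j) '' K) = (z : ℝ))
    (L : List (Fin n → ℤ))
    (hL : cgList (K ∩ {x | ∑ j, (a j : ℝ) * x j = (z : ℝ)})
      (L.map fun w => fun j => ((w j : ℝ))) = ∅) :
    ∃ ns : Fin L.length → ℕ,
      (cgList K (List.ofFn fun i => fun j => ((L.get i) j : ℝ) + (ns i : ℝ) * (a j : ℝ)) ∩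
          {x | ∑ j, (a j : ℝ) * x j = (z : ℝ)} = ∅) ∧
      (∀ x ∈ cgList K
          (List.ofFn fun i => fun j => ((L.get i) j : ℝ) + (ns i : ℝ) * (a j : ℝ)),
        (∑ j, (a j : ℝ) * x j) < (z : ℝ)) ∧
      (∀ x ∈ cgCut
          (cgList K (List.ofFn fun i => fun j => ((L.get i) j : ℝ) + (ns i : ℝ) * (a j : ℝ)))
          (fun j => (a j : ℝ)),
        (∑ j, (a j : ℝ) * x j) ≤ (z : ℝ) - 1) := by
  set A : Fin n → ℝ := fun j => (a j : ℝ)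
  have hub : ∀ x ∈ K, A ⬝ᵥ x ≤ z := fun x hx =>
    hz ▸ le_csSup (hK.bddAbove_image (continuous_dotProduct A).continuousOn) ⟨x, hx, rfl⟩
  obtain ⟨ns, hns⟩ := exists_lift_cgList_inter_face_eq_empty _ A z L hK hub hL
  have hlt : ∀ x ∈ cgList K (List.ofFn fun i => (fun j => (L.get i j : ℝ)) + (ns i : ℝ) • A),
      A ⬝ᵥ x < z := fun x hx =>
    (hub x (cgList_subset _ _ hx)).lt_of_ne fun hax => hns.subset ⟨hx, hax⟩
  exact ⟨ns, hns, hlt, fun x hx => dotProduct_le_sub_one_of_mem_cgCut (hK.cgList _) hlt hx⟩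

/-- If a list `L` of CG cuts empties the face `F = F_K(a)` (where
`h_K(a) = z ∈ ℤ`), then the lifted list `L'` (with elements `a_i + n_i·a`,
`n_i ∈ ℕ`) empties the face of `K`, forces `a·x < h_K(a)` on `CG(K, L')`, and
one further CG cut induced by `a` brings the maximum of `a·x` down to at most
`h_K(a) − 1`. -/
theorem stmt16 (n : ℕ) (K : Set (Fin n → ℝ)) (hne : K.Nonempty)
    (hK : IsCompact K) (hconv : Convex ℝ K) (a : Fin n → ℤ) (z : ℤ)
    (hz : sSup ((fun x => ∑ j, (a j : ℝ) * x j) '' K) = (z : ℝ))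
    (L : List (Fin n → ℤ))
    (hL : cgList (K ∩ {x | ∑ j, (a j : ℝ) * x j = (z : ℝ)})
      (L.map fun w => fun j => ((w j : ℝ))) = ∅) :
    ∃ ns : Fin L.length → ℕ,
      (cgList K (List.ofFn fun i => fun j => ((L.get i) j : ℝ) + (ns i : ℝ) * (a j : ℝ)) ∩
          {x | ∑ j, (a j : ℝ) * x j = (z : ℝ)} = ∅) ∧
      (∀ x ∈ cgList K
          (List.ofFn fun i => fun j => ((L.get i) j : ℝ) + (ns i : ℝ) * (a j : ℝ)),
        (∑ j, (a j : ℝ) * x j) < (z : ℝ)) ∧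
      (∀ x ∈ cgCut
          (cgList K (List.ofFn fun i => fun j => ((L.get i) j : ℝ) + (ns i : ℝ) * (a j : ℝ)))
          (fun j => (a j : ℝ)),
        (∑ j, (a j : ℝ) * x j) ≤ (z : ℝ) - 1) :=
  stmt16_general n K hK a z hz L hL
end

section
/- For the set Q_n = {(x, y) ∈ [0,1]^{2n} : Σ_{i=1}^n y_i ≤ n/2 − 1, |x_i − 1/2| ≤ y_i for all i}, the inequality y_i ≥ 1/2 is a valid split cut for each i ∈ [n]: it is valid for Q_n ∩ {x_i ≤ 0} and for Q_n ∩ {x_i ≥ 1}; adding the n inequalities y_i ≥ 1/2 for all i to Q_n yields the empty set. -/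
/-- The inequalities `y_i ≥ 1/2` are valid split cuts for `Q_n` with respect to
the disjunctions `x_i ≤ 0` or `x_i ≥ 1`, and adding all of them to `Q_n` yields
the empty set. -/
theorem stmt18 (n : ℕ) :
    (∀ i : Fin n, ∀ p : (Fin n → ℝ) × (Fin n → ℝ),
      ((∀ k, 0 ≤ p.1 k ∧ p.1 k ≤ 1) ∧ (∀ k, 0 ≤ p.2 k ∧ p.2 k ≤ 1) ∧
        (∑ k, p.2 k) ≤ (n : ℝ) / 2 - 1 ∧ ∀ k, |p.1 k - 1/2| ≤ p.2 k) →
      p.1 i ≤ 0 → (1 : ℝ) / 2 ≤ p.2 i) ∧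
    (∀ i : Fin n, ∀ p : (Fin n → ℝ) × (Fin n → ℝ),
      ((∀ k, 0 ≤ p.1 k ∧ p.1 k ≤ 1) ∧ (∀ k, 0 ≤ p.2 k ∧ p.2 k ≤ 1) ∧
        (∑ k, p.2 k) ≤ (n : ℝ) / 2 - 1 ∧ ∀ k, |p.1 k - 1/2| ≤ p.2 k) →
      1 ≤ p.1 i → (1 : ℝ) / 2 ≤ p.2 i) ∧
    {p : (Fin n → ℝ) × (Fin n → ℝ) |
      ((∀ k, 0 ≤ p.1 k ∧ p.1 k ≤ 1) ∧ (∀ k, 0 ≤ p.2 k ∧ p.2 k ≤ 1) ∧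
        (∑ k, p.2 k) ≤ (n : ℝ) / 2 - 1 ∧ ∀ k, |p.1 k - 1/2| ≤ p.2 k) ∧
      ∀ i, (1 : ℝ) / 2 ≤ p.2 i} = ∅ := by
  refine ⟨?_, ?_, ?_⟩
  · rintro i p ⟨hx, hy, hs, habs⟩ hle
    have h := (abs_le.mp (habs i)).2
    linarith [h, (abs_le.mp (habs i)).1, hle]
  · rintro i p ⟨hx, hy, hs, habs⟩ hge
    linarith [le_abs_self (p.1 i - 1/2), habs i]
  · ext p
    simp only [Set.mem_setOf_eq, Set.mem_empty_iff_false, iff_false]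
    rintro ⟨⟨hx, hy, hs, habs⟩, hall⟩
    have hsum : (n : ℝ) / 2 ≤ ∑ k, p.2 k := by
      calc (n : ℝ) / 2 = ∑ _k : Fin n, (1 : ℝ) / 2 := by
            simp [Finset.sum_const]; ring
        _ ≤ ∑ k, p.2 k := Finset.sum_le_sum fun k _ => hall k
    linarith
end

section
/- Let a ∈ ℝⁿ with ‖a‖_∞ > 0, let a' be a precision-N Diophantine approximation of a, and let α = ‖a‖_∞/‖a'‖_∞. If p is a coordinate with |a_p| = ‖a‖_∞, then a'_p = ±‖a'‖_∞ (with the sign of a_p), and the vector a − α·a' has p-th coordinate equal to 0; moreover every coordinate of a that is zero is also zero in a'. -/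
/-!
On the maximal coordinate `p` one has `a p / ‖a‖_∞ = sign (a p)`, so `l * (a p / ‖a‖_∞)` is
already the integer `l * sign (a p)`; likewise `l * (a i / ‖a‖_∞) = 0` when `a i = 0`. An integer
vector within sup-distance `1 / N ≤ 1` of a real vector must agree with it on every coordinate
where the real vector is an integer, which pins down `a' p` and the zero coordinates of `a'`.
Then `‖a‖_∞ / l * (l * sign (a p)) = |a p| * sign (a p) = a p`.
-/

theorem div_abs_self_eq_sign {α : Type*} [Field α] [LinearOrder α] [IsStrictOrderedRing α]
    (x : α) : x / |x| = SignType.sign x := by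
  rcases eq_or_ne x 0 with rfl | hx
  · simp
  · rw [div_eq_iff (abs_ne_zero.mpr hx), sign_mul_abs]

theorem Int.eq_of_abs_cast_sub_lt_one {R : Type*} [Ring R] [LinearOrder R]
    [IsStrictOrderedRing R] {m z : ℤ} (h : |(m : R) - z| < 1) : z = m := by
  have hmz : |m - z| < 1 := by exact_mod_cast h
  linarith [Int.abs_lt_one_iff.mp hmz]

theorem eq_of_iSup_abs_sub_lt_one_div {ι : Type*} [Finite ι] {x : ι → ℝ} {z : ι → ℤ} {N : ℕ}
    (h : (⨆ j, |x j - z j|) < 1 / N) {j : ι} {m : ℤ} (hm : x j = m) : z j = m := by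
  have hj : |x j - z j| < 1 / N :=
    (le_ciSup (Set.finite_range _).bddAbove j).trans_lt h
  have hN : (1 : ℝ) / N ≤ 1 := by simpa only [one_div] using Nat.cast_inv_le_one N
  exact Int.eq_of_abs_cast_sub_lt_one (hm ▸ hj.trans_le hN)

theorem stmt19_general (n N : ℕ) (a : Fin n → ℝ)
    (a' : Fin n → ℤ) (l : ℕ) (hl1 : 1 ≤ l)
    (happrox : (⨆ j, |(l : ℝ) * (a j / (⨆ k, |a k|)) - (a' j : ℝ)|) < 1 / N)
    (hnorm : (⨆ j, |(a' j : ℝ)|) = (l : ℝ))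
    (p : Fin n) (hp : |a p| = ⨆ j, |a j|) :
    ((0 < a p → (a' p : ℝ) = (l : ℝ)) ∧ (a p < 0 → (a' p : ℝ) = -(l : ℝ))) ∧
    a p - ((⨆ j, |a j|) / (⨆ j, |(a' j : ℝ)|)) * (a' p : ℝ) = 0 ∧
    ∀ i, a i = 0 → a' i = 0 := by
  have hap' : a' p = l * SignType.sign (a p) :=
    eq_of_iSup_abs_sub_lt_one_div happrox (by rw [← hp, div_abs_self_eq_sign]; push_cast; rfl)
  have hl : (l : ℝ) ≠ 0 := Nat.cast_ne_zero.mpr (by omega)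
  refine ⟨⟨fun h => by simp [hap', h], fun h => by simp [hap', h]⟩, ?_,
    fun i hi => eq_of_iSup_abs_sub_lt_one_div happrox (by simp [hi])⟩
  rw [hnorm, hap', ← hp]
  push_cast
  rw [← mul_assoc, div_mul_cancel₀ _ hl, abs_mul_sign, sub_self]

/-- Key step of the iterated Diophantine approximation (proof of Lemma 3.3):
if `a'` is a precision-`N` Diophantine approximation of `a`, `α = ‖a‖_∞/‖a'‖_∞`,
and `|a_p| = ‖a‖_∞`, then `a'_p = ±‖a'‖_∞ = ±l` (with the sign of `a_p`), the
`p`-th coordinate of `a − α·a'` vanishes, and zero coordinates of `a` remain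
zero in `a'`. -/
theorem stmt19 (n N : ℕ) (a : Fin n → ℝ) (ha : 0 < ⨆ j, |a j|)
    (a' : Fin n → ℤ) (l : ℕ) (hl1 : 1 ≤ l) (hl2 : l ≤ N ^ n)
    (happrox : (⨆ j, |(l : ℝ) * (a j / (⨆ k, |a k|)) - (a' j : ℝ)|) < 1 / N)
    (hnorm : (⨆ j, |(a' j : ℝ)|) = (l : ℝ))
    (p : Fin n) (hp : |a p| = ⨆ j, |a j|) :
    ((0 < a p → (a' p : ℝ) = (l : ℝ)) ∧ (a p < 0 → (a' p : ℝ) = -(l : ℝ))) ∧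
    a p - ((⨆ j, |a j|) / (⨆ j, |(a' j : ℝ)|)) * (a' p : ℝ) = 0 ∧
    ∀ i, a i = 0 → a' i = 0 :=
  stmt19_general n N a a' l hl1 happrox hnorm p hp
end
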